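/- arXiv:2502.01347 — 6 statements merged into one kernel-verified Lean document; each statement's English description precedes it below -/
import Mathlib

section
/- Let Σ ∈ ℝ^{2d×2d} be symmetric positive definite with block decomposition Σ = [[Σ_xx, Σ_xy], [Σ_yx, Σ_yy]] into d×d blocks, let θ* = (θ*_xᵀ, 0ᵀ)ᵀ ∈ ℝ^{2d} with ‖θ*‖₂ = 1, let P_y be the orthogonal projector onto the last d coordinates, and let S := Σ_yy − Σ_yx Σ_xx^{-1} Σ_xy be the Schur complement of Σ with respect to Σ_xx. Then, for every τ > 0, the quantity C^Σ := θ*ᵀ Σ (Σ + τI)^{-1} P_y Σ θ* satisfies |C^Σ| ≤ min( ‖Σ_yx‖_op, λmax(Σ)²/τ, τ · √(θ*_xᵀ Σ_xx θ*_x) · (λmax(Σ_yy) − λmin(S)) / (λmin(S) · √(λmin(Σ_xx))) ). -/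
open MeasureTheory ProbabilityTheory Matrix Real

noncomputable section

/-- Squared Euclidean norm of a vector. -/
def sqNorm {m : Type*} [Fintype m] (v : m → ℝ) : ℝ := ∑ i, v i ^ 2

/-- Smallest eigenvalue of a symmetric matrix, via the Rayleigh quotient. -/
def lmin {m : Type*} [Fintype m] (A : Matrix m m ℝ) : ℝ :=
  ⨅ v : {v : m → ℝ // sqNorm v = 1}, dotProduct v.1 (A.mulVec v.1)

/-- Largest eigenvalue of a symmetric matrix, via the Rayleigh quotient. -/
def lmax {m : Type*} [Fintype m] (A : Matrix m m ℝ) : ℝ :=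
  ⨆ v : {v : m → ℝ // sqNorm v = 1}, dotProduct v.1 (A.mulVec v.1)

/-- Operator (spectral) norm of a rectangular matrix. -/
def opNorm {m n : Type*} [Fintype m] [Fintype n] (A : Matrix m n ℝ) : ℝ :=
  ⨆ v : {v : n → ℝ // sqNorm v = 1}, Real.sqrt (sqNorm (A.mulVec v.1))

/-- Projector onto the last `d` coordinates (the spurious feature `y`). -/
def Py (d : ℕ) : Matrix (Fin d ⊕ Fin d) (Fin d ⊕ Fin d) ℝ :=
  Matrix.fromBlocks 0 0 0 1

/-!
Put `θ = (θx, 0)` and let `w` solve `(Σ + τ I) w = P_y Σ θ = (0, Σ_yx θx)`. Then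
`C^Σ = ⟪Σθ, w⟫ = -τ ⟪θx, w_x⟫`, the second form because `Σ (Σ + τ I)⁻¹ = I - τ (Σ + τ I)⁻¹` and
`θ ⊥ range P_y`. Coercivity of `Σ + τ I` gives `τ ‖w‖ ≤ ‖Σ_yx θx‖`, which yields the first two
bounds. For the third, the first block row of the equation for `w` turns `⟪θx, w_x⟫` into
`-⟪Σ_yx z, w_y⟫` with `z = (Σ_xx + τ I)⁻¹ θx`; the Schur decomposition of the quadratic form of `Σ`
gives `λmin(S) ‖w_y‖ ≤ ‖Σ_yx θx‖`, and Cauchy–Schwarz for the inner product of `Σ_xx⁻¹` gives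
`‖Σ_yx c‖² ≤ (λmax(Σ_yy) - λmin(S)) cᵀ Σ_xx c`, applied to `c = θx` and to `c = z`.
-/

section SqNorm

variable {m : Type*} [Fintype m]

lemma sqNorm_eq_dotProduct_self (v : m → ℝ) : sqNorm v = v ⬝ᵥ v := by
  simp [sqNorm, dotProduct, sq]

lemma sqNorm_nonneg (v : m → ℝ) : 0 ≤ sqNorm v :=
  Finset.sum_nonneg fun _ _ => sq_nonneg _

@[simp]
lemma sqNorm_zero : sqNorm (0 : m → ℝ) = 0 := by
  simp [sqNorm]

lemma sqNorm_smul (c : ℝ) (v : m → ℝ) : sqNorm (c • v) = c ^ 2 * sqNorm v := by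
  simp [sqNorm, mul_pow, Finset.mul_sum]

@[simp]
lemma sqNorm_sumElim {n : Type*} [Fintype n] (x : m → ℝ) (y : n → ℝ) :
    sqNorm (Sum.elim x y) = sqNorm x + sqNorm y := by
  simp [sqNorm, Fintype.sum_sum_type]

lemma sqNorm_comp_inl_le {n : Type*} [Fintype n] (w : m ⊕ n → ℝ) :
    sqNorm (w ∘ Sum.inl) ≤ sqNorm w := by
  rw [← Sum.elim_comp_inl_inr w, sqNorm_sumElim, Sum.elim_comp_inl]
  linarith [sqNorm_nonneg (w ∘ Sum.inr)]

lemma dotProduct_sq_le_sqNorm_mul_sqNorm (u v : m → ℝ) :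
    (u ⬝ᵥ v) ^ 2 ≤ sqNorm u * sqNorm v :=
  Finset.sum_mul_sq_le_sq_mul_sq _ _ _

lemma mul_dotProduct_le_sqNorm {c : ℝ} (hc : 0 < c) {x y : m → ℝ}
    (h : c * sqNorm x ≤ x ⬝ᵥ y) : c * (x ⬝ᵥ y) ≤ sqNorm y := by
  have hcs := dotProduct_sq_le_sqNorm_mul_sqNorm x y
  rcases le_or_gt (x ⬝ᵥ y) 0 with hxy | hxy
  · nlinarith [sqNorm_nonneg y]
  · refine le_of_mul_le_mul_right ?_ hxy
    nlinarith [sqNorm_nonneg y]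

lemma sq_mul_sqNorm_le {c : ℝ} (hc : 0 < c) {x y : m → ℝ}
    (h : c * sqNorm x ≤ x ⬝ᵥ y) : c ^ 2 * sqNorm x ≤ sqNorm y :=
  calc c ^ 2 * sqNorm x = c * (c * sqNorm x) := by ring
    _ ≤ c * (x ⬝ᵥ y) := mul_le_mul_of_nonneg_left h hc.le
    _ ≤ sqNorm y := mul_dotProduct_le_sqNorm hc h

lemma exists_sqNorm_eq_one [Nonempty m] : ∃ u : m → ℝ, sqNorm u = 1 := by
  classical
  exact ⟨Pi.single (Classical.arbitrary m) 1, by simp [sqNorm, Pi.single_apply, ite_pow]⟩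

lemma exists_sqNorm_eq_one_and_eq_smul {v : m → ℝ} (hv : v ≠ 0) :
    ∃ u : m → ℝ, sqNorm u = 1 ∧ ∃ r : ℝ, v = r • u := by
  have hs : 0 < sqNorm v := (sqNorm_nonneg v).lt_of_ne' <| by
    rwa [Ne, sqNorm_eq_dotProduct_self, dotProduct_self_eq_zero]
  have hr : 0 < √(sqNorm v) := Real.sqrt_pos.mpr hs
  refine ⟨(√(sqNorm v))⁻¹ • v, ?_, √(sqNorm v), ?_⟩
  · rw [sqNorm_smul, inv_pow, Real.sq_sqrt hs.le, inv_mul_cancel₀ hs.ne']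
  · rw [smul_smul, mul_inv_cancel₀ hr.ne', one_smul]

@[fun_prop]
lemma continuous_sqNorm : Continuous (sqNorm : (m → ℝ) → ℝ) :=
  continuous_finsetSum _ fun i _ => (continuous_apply i).pow 2

lemma isCompact_sqNorm_eq_one : IsCompact {v : m → ℝ | sqNorm v = 1} := by
  refine (isCompact_univ_pi fun _ => isCompact_Icc (a := (-1 : ℝ)) (b := 1)).of_isClosed_subset
    (isClosed_eq continuous_sqNorm continuous_const) fun v hv i _ =>
      abs_le.mp (abs_le_of_sq_le_sq ?_ zero_le_one)
  rw [one_pow, ← hv]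
  exact Finset.single_le_sum (f := fun j => v j ^ 2) (fun j _ => sq_nonneg (v j))
    (Finset.mem_univ i)

end SqNorm

section Rayleigh

variable {m n : Type*} [Fintype m] [Fintype n]

lemma bddAbove_range_of_continuous {f : (m → ℝ) → ℝ} (hf : Continuous f) :
    BddAbove (Set.range fun v : {v : m → ℝ // sqNorm v = 1} => f v.1) := by
  have h := isCompact_sqNorm_eq_one.bddAbove_image hf.continuousOn
  rwa [Set.image_eq_range] at h

lemma bddBelow_range_of_continuous {f : (m → ℝ) → ℝ} (hf : Continuous f) :
    BddBelow (Set.range fun v : {v : m → ℝ // sqNorm v = 1} => f v.1) := by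
  have h := isCompact_sqNorm_eq_one.bddBelow_image hf.continuousOn
  rwa [Set.image_eq_range] at h

lemma dotProduct_mulVec_le_lmax_mul (A : Matrix m m ℝ) (v : m → ℝ) :
    v ⬝ᵥ A *ᵥ v ≤ lmax A * sqNorm v := by
  rcases eq_or_ne v 0 with rfl | hv
  · simp
  obtain ⟨u, hu, r, rfl⟩ := exists_sqNorm_eq_one_and_eq_smul hv
  have hle : u ⬝ᵥ A *ᵥ u ≤ lmax A :=
    le_ciSup (bddAbove_range_of_continuous (f := fun v => v ⬝ᵥ A *ᵥ v) (by fun_prop)) ⟨u, hu⟩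
  simp only [mulVec_smul, dotProduct_smul, smul_dotProduct, smul_eq_mul, sqNorm_smul, hu]
  nlinarith [sq_nonneg r]

lemma lmin_mul_le_dotProduct_mulVec (A : Matrix m m ℝ) (v : m → ℝ) :
    lmin A * sqNorm v ≤ v ⬝ᵥ A *ᵥ v := by
  rcases eq_or_ne v 0 with rfl | hv
  · simp
  obtain ⟨u, hu, r, rfl⟩ := exists_sqNorm_eq_one_and_eq_smul hv
  have hle : lmin A ≤ u ⬝ᵥ A *ᵥ u :=
    ciInf_le (bddBelow_range_of_continuous (f := fun v => v ⬝ᵥ A *ᵥ v) (by fun_prop)) ⟨u, hu⟩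
  simp only [mulVec_smul, dotProduct_smul, smul_dotProduct, smul_eq_mul, sqNorm_smul, hu]
  nlinarith [sq_nonneg r]

lemma lmin_le_lmax_of_dotProduct_mulVec_le [Nonempty m] {A B : Matrix m m ℝ}
    (h : ∀ v, v ⬝ᵥ A *ᵥ v ≤ v ⬝ᵥ B *ᵥ v) : lmin A ≤ lmax B := by
  obtain ⟨u, hu⟩ := exists_sqNorm_eq_one (m := m)
  simpa [hu] using
    (lmin_mul_le_dotProduct_mulVec A u).trans ((h u).trans (dotProduct_mulVec_le_lmax_mul B u))

lemma lmin_pos [Nonempty m] {A : Matrix m m ℝ} (hA : A.PosDef) : 0 < lmin A := by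
  obtain ⟨u, hu⟩ := exists_sqNorm_eq_one (m := m)
  obtain ⟨u₀, hu₀, hmin⟩ := isCompact_sqNorm_eq_one.exists_isMinOn ⟨u, hu⟩
    (f := fun v => v ⬝ᵥ A *ᵥ v) (by fun_prop)
  have : Nonempty {v : m → ℝ // sqNorm v = 1} := ⟨⟨u, hu⟩⟩
  have hu₀ne : u₀ ≠ 0 := by
    rintro rfl
    simp at hu₀
  have hpos : 0 < u₀ ⬝ᵥ A *ᵥ u₀ := by simpa using hA.dotProduct_mulVec_pos hu₀ne
  exact hpos.trans_le (le_ciInf fun v => hmin v.2)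

lemma opNorm_nonneg (A : Matrix m n ℝ) : 0 ≤ opNorm A :=
  Real.iSup_nonneg fun _ => Real.sqrt_nonneg _

lemma sqNorm_mulVec_le_opNorm_sq (A : Matrix m n ℝ) {v : n → ℝ} (hv : sqNorm v = 1) :
    sqNorm (A *ᵥ v) ≤ opNorm A ^ 2 := by
  have h : √(sqNorm (A *ᵥ v)) ≤ opNorm A :=
    le_ciSup (bddAbove_range_of_continuous (f := fun v => √(sqNorm (A *ᵥ v))) (by fun_prop))
      ⟨v, hv⟩
  exact (Real.sqrt_le_left (opNorm_nonneg A)).mp h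

end Rayleigh

section QuadraticForm

variable {m : Type*} [Fintype m]

lemma dotProduct_mulVec_comm {A : Matrix m m ℝ} (hA : A.IsSymm) (x y : m → ℝ) :
    x ⬝ᵥ A *ᵥ y = y ⬝ᵥ A *ᵥ x := by
  simpa only [hA.eq] using dotProduct_transpose_mulVec A x y

lemma dotProduct_transpose_mul_mul_mulVec {n : Type*} [Fintype n] (B : Matrix m n ℝ)
    (M : Matrix m m ℝ) (v : n → ℝ) :
    v ⬝ᵥ (Bᵀ * M * B) *ᵥ v = (B *ᵥ v) ⬝ᵥ M *ᵥ (B *ᵥ v) := by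
  rw [← mulVec_mulVec, ← mulVec_mulVec, dotProduct_transpose_mulVec, dotProduct_comm]

lemma dotProduct_add_smul_one_mulVec [DecidableEq m] (A : Matrix m m ℝ) (τ : ℝ)
    (x : m → ℝ) : x ⬝ᵥ (A + τ • 1) *ᵥ x = x ⬝ᵥ A *ᵥ x + τ * sqNorm x := by
  rw [add_mulVec, smul_mulVec, one_mulVec, dotProduct_add, dotProduct_smul, smul_eq_mul,
    sqNorm_eq_dotProduct_self]

lemma lmin_mul_dotProduct_mulVec_le [DecidableEq m] {A : Matrix m m ℝ} (hA : 0 < lmin A)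
    {τ : ℝ} (hτ : 0 ≤ τ) {y z : m → ℝ} (h : (A + τ • 1) *ᵥ z = y) :
    lmin A * (z ⬝ᵥ A *ᵥ z) ≤ sqNorm y := by
  have hzy : z ⬝ᵥ y = z ⬝ᵥ A *ᵥ z + τ * sqNorm z :=
    h ▸ dotProduct_add_smul_one_mulVec A τ z
  have hτz : 0 ≤ τ * sqNorm z := mul_nonneg hτ (sqNorm_nonneg z)
  calc lmin A * (z ⬝ᵥ A *ᵥ z) ≤ lmin A * (z ⬝ᵥ y) := by gcongr; linarith
    _ ≤ sqNorm y :=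
      mul_dotProduct_le_sqNorm hA (by linarith [lmin_mul_le_dotProduct_mulVec A z])

namespace Matrix.PosSemidef

variable {A : Matrix m m ℝ}

lemma dotProduct_mulVec_self_nonneg (hA : A.PosSemidef) (x : m → ℝ) :
    0 ≤ x ⬝ᵥ A *ᵥ x := by
  simpa using hA.dotProduct_mulVec_nonneg x

lemma dotProduct_mulVec_sq_le (hA : A.PosSemidef) (x y : m → ℝ) :
    (x ⬝ᵥ A *ᵥ y) ^ 2 ≤ (x ⬝ᵥ A *ᵥ x) * (y ⬝ᵥ A *ᵥ y) := by
  classical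
  have h := (toBilin' A).apply_mul_apply_le_of_forall_zero_le
    (fun v => by simpa only [toBilin'_apply'] using hA.dotProduct_mulVec_self_nonneg v) x y
  simp only [toBilin'_apply'] at h
  rwa [← dotProduct_mulVec_comm (isHermitian_iff_isSymm.mp hA.1) x y, ← sq] at h

lemma sqNorm_mulVec_le (hA : A.PosSemidef) (v : m → ℝ) :
    sqNorm (A *ᵥ v) ≤ lmax A ^ 2 * sqNorm v := by
  set q := A *ᵥ v
  have hq : sqNorm q = v ⬝ᵥ A *ᵥ q := by
    rw [sqNorm_eq_dotProduct_self, dotProduct_mulVec_comm (isHermitian_iff_isSymm.mp hA.1)]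
  have hv := dotProduct_mulVec_le_lmax_mul A v
  have key : sqNorm q * sqNorm q ≤ lmax A ^ 2 * sqNorm v * sqNorm q :=
    calc sqNorm q * sqNorm q = (v ⬝ᵥ A *ᵥ q) ^ 2 := by rw [hq, sq]
      _ ≤ (v ⬝ᵥ A *ᵥ v) * (q ⬝ᵥ A *ᵥ q) := hA.dotProduct_mulVec_sq_le v q
      _ ≤ (lmax A * sqNorm v) * (lmax A * sqNorm q) :=
        mul_le_mul hv (dotProduct_mulVec_le_lmax_mul A q) (hA.dotProduct_mulVec_self_nonneg q)
          ((hA.dotProduct_mulVec_self_nonneg v).trans hv)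
      _ = lmax A ^ 2 * sqNorm v * sqNorm q := by ring
  rcases (sqNorm_nonneg q).eq_or_lt with h0 | hpos
  · rw [← h0]
    exact mul_nonneg (sq_nonneg _) (sqNorm_nonneg v)
  · exact le_of_mul_le_mul_right key hpos

end Matrix.PosSemidef

namespace Matrix.PosDef

variable [DecidableEq m] {A : Matrix m m ℝ}

omit [Fintype m] in
lemma add_smul_one (hA : A.PosDef) {τ : ℝ} (hτ : 0 ≤ τ) : (A + τ • 1).PosDef :=
  hA.add_posSemidef (PosSemidef.one.smul hτ)

lemma mulVec_inv_mulVec (hA : A.PosDef) (v : m → ℝ) : A *ᵥ (A⁻¹ *ᵥ v) = v := by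
  rw [mulVec_mulVec, mul_nonsing_inv A hA.det_pos.ne'.isUnit, one_mulVec]

lemma inv_mulVec_mulVec (hA : A.PosDef) (v : m → ℝ) : A⁻¹ *ᵥ (A *ᵥ v) = v := by
  rw [mulVec_mulVec, nonsing_inv_mul A hA.det_pos.ne'.isUnit, one_mulVec]

lemma dotProduct_sq_le (hA : A.PosDef) (a c : m → ℝ) :
    (a ⬝ᵥ c) ^ 2 ≤ (a ⬝ᵥ A⁻¹ *ᵥ a) * (c ⬝ᵥ A *ᵥ c) := by
  have h := hA.inv.posSemidef.dotProduct_mulVec_sq_le a (A *ᵥ c)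
  rwa [hA.inv_mulVec_mulVec, dotProduct_comm (A *ᵥ c) c] at h

end Matrix.PosDef

end QuadraticForm

section SchurComplement

lemma Matrix.PosDef.of_fromBlocks₁₁ {m n : Type*} {A : Matrix m m ℝ} {B : Matrix m n ℝ}
    {D : Matrix n n ℝ} (hSig : (fromBlocks A B Bᵀ D).PosDef) : A.PosDef :=
  hSig.submatrix Sum.inl_injective

variable {m n : Type*} [Fintype m] [Fintype n] [DecidableEq m]
  {A : Matrix m m ℝ} {B : Matrix m n ℝ} {D : Matrix n n ℝ}

lemma sumElim_dotProduct_fromBlocks_mulVec (hA : A.PosDef) (x : m → ℝ) (y : n → ℝ) :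
    Sum.elim x y ⬝ᵥ fromBlocks A B Bᵀ D *ᵥ Sum.elim x y =
      (x + (A⁻¹ * B) *ᵥ y) ⬝ᵥ A *ᵥ (x + (A⁻¹ * B) *ᵥ y) +
        y ⬝ᵥ (D - Bᵀ * A⁻¹ * B) *ᵥ y := by
  have := hA.isUnit.invertible
  simpa [dotProduct_mulVec, conjTranspose_eq_transpose_of_trivial] using
    schur_complement_eq₁₁ B D x y hA.1

lemma Matrix.PosDef.schur_of_fromBlocks (hSig : (fromBlocks A B Bᵀ D).PosDef) :
    (D - Bᵀ * A⁻¹ * B).PosDef := by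
  have hA := hSig.of_fromBlocks₁₁
  have := hA.isUnit.invertible
  have hpsd : (D - Bᵀ * A⁻¹ * B).PosSemidef := by
    simpa [conjTranspose_eq_transpose_of_trivial] using
      (PosDef.fromBlocks₁₁ B D hA).mp (by simpa using hSig.posSemidef)
  refine .of_dotProduct_mulVec_pos hpsd.1 fun y hy => ?_
  have hne : Sum.elim (-((A⁻¹ * B) *ᵥ y)) y ≠ 0 := fun h =>
    hy (by simpa using congrArg (· ∘ Sum.inr) h)
  simpa [sumElim_dotProduct_fromBlocks_mulVec hA] using hSig.dotProduct_mulVec_pos hne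

lemma dotProduct_schur_mulVec_le (hSig : (fromBlocks A B Bᵀ D).PosDef) (w : m ⊕ n → ℝ) :
    (w ∘ Sum.inr) ⬝ᵥ (D - Bᵀ * A⁻¹ * B) *ᵥ (w ∘ Sum.inr) ≤
      w ⬝ᵥ fromBlocks A B Bᵀ D *ᵥ w := by
  have hA := hSig.of_fromBlocks₁₁
  have h := sumElim_dotProduct_fromBlocks_mulVec (B := B) (D := D) hA
    (w ∘ Sum.inl) (w ∘ Sum.inr)
  rw [Sum.elim_comp_inl_inr] at h
  linarith [hA.posSemidef.dotProduct_mulVec_self_nonneg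
    (w ∘ Sum.inl + (A⁻¹ * B) *ᵥ (w ∘ Sum.inr))]

lemma lmin_schur_le_lmax [Nonempty n] (hSig : (fromBlocks A B Bᵀ D).PosDef) :
    lmin (D - Bᵀ * A⁻¹ * B) ≤ lmax D := by
  have hA := hSig.of_fromBlocks₁₁
  refine lmin_le_lmax_of_dotProduct_mulVec_le fun v => ?_
  rw [sub_mulVec, dotProduct_sub, dotProduct_transpose_mul_mul_mulVec]
  linarith [hA.inv.posSemidef.dotProduct_mulVec_self_nonneg (B *ᵥ v)]

lemma sqNorm_transpose_mulVec_le [Nonempty n] (hSig : (fromBlocks A B Bᵀ D).PosDef)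
    (c : m → ℝ) :
    sqNorm (Bᵀ *ᵥ c) ≤ (lmax D - lmin (D - Bᵀ * A⁻¹ * B)) * (c ⬝ᵥ A *ᵥ c) := by
  have hA := hSig.of_fromBlocks₁₁
  set S := D - Bᵀ * A⁻¹ * B with hS
  set r := Bᵀ *ᵥ c
  have hr : sqNorm r = (B *ᵥ r) ⬝ᵥ c := by
    rw [sqNorm_eq_dotProduct_self, dotProduct_transpose_mulVec, dotProduct_comm]
  have hBr : (B *ᵥ r) ⬝ᵥ A⁻¹ *ᵥ (B *ᵥ r) ≤ (lmax D - lmin S) * sqNorm r := by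
    rw [← dotProduct_transpose_mul_mul_mulVec,
      show Bᵀ * A⁻¹ * B = D - S by rw [hS, sub_sub_cancel], sub_mulVec, dotProduct_sub]
    linarith [dotProduct_mulVec_le_lmax_mul D r, lmin_mul_le_dotProduct_mulVec S r]
  have hc := hA.posSemidef.dotProduct_mulVec_self_nonneg c
  have key : sqNorm r * sqNorm r ≤ (lmax D - lmin S) * (c ⬝ᵥ A *ᵥ c) * sqNorm r :=
    calc sqNorm r * sqNorm r = ((B *ᵥ r) ⬝ᵥ c) ^ 2 := by rw [← hr, sq]
      _ ≤ ((B *ᵥ r) ⬝ᵥ A⁻¹ *ᵥ (B *ᵥ r)) * (c ⬝ᵥ A *ᵥ c) := hA.dotProduct_sq_le _ _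
      _ ≤ (lmax D - lmin S) * sqNorm r * (c ⬝ᵥ A *ᵥ c) := mul_le_mul_of_nonneg_right hBr hc
      _ = (lmax D - lmin S) * (c ⬝ᵥ A *ᵥ c) * sqNorm r := by ring
  rcases (sqNorm_nonneg r).eq_or_lt with h0 | hpos
  · rw [← h0]
    exact mul_nonneg (sub_nonneg.mpr (lmin_schur_le_lmax hSig)) hc
  · exact le_of_mul_le_mul_right key hpos

end SchurComplement

section SpuriousCorrelation

variable {m n : Type*} [Fintype m] [Fintype n] [DecidableEq m] [DecidableEq n]

def spuriousCorrelation (Sig : Matrix (m ⊕ n) (m ⊕ n) ℝ) (τ : ℝ) (θx : m → ℝ) : ℝ :=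
  Sum.elim θx 0 ⬝ᵥ (Sig * (Sig + τ • 1)⁻¹ * fromBlocks 0 0 0 1 * Sig) *ᵥ Sum.elim θx 0

variable {A : Matrix m m ℝ} {B : Matrix m n ℝ} {D : Matrix n n ℝ} {τ : ℝ} {θx : m → ℝ}
  {w : m ⊕ n → ℝ}

lemma spuriousCorrelation_eq_dotProduct_mulVec (hSig : (fromBlocks A B Bᵀ D).PosDef)
    (hτ : 0 ≤ τ)
    (hw : (fromBlocks A B Bᵀ D + τ • 1) *ᵥ w = Sum.elim (0 : m → ℝ) (Bᵀ *ᵥ θx)) :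
    spuriousCorrelation (fromBlocks A B Bᵀ D) τ θx =
      Sum.elim θx 0 ⬝ᵥ fromBlocks A B Bᵀ D *ᵥ w := by
  have hP : fromBlocks 0 0 0 1 *ᵥ (fromBlocks A B Bᵀ D *ᵥ Sum.elim θx 0) =
      Sum.elim (0 : m → ℝ) (Bᵀ *ᵥ θx) := by
    simp [fromBlocks_mulVec]
  rw [spuriousCorrelation, ← mulVec_mulVec, ← mulVec_mulVec, ← mulVec_mulVec, hP, ← hw,
    (hSig.add_smul_one hτ).inv_mulVec_mulVec]

lemma spuriousCorrelation_eq_neg_mul (hSig : (fromBlocks A B Bᵀ D).PosDef) (hτ : 0 ≤ τ)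
    (hw : (fromBlocks A B Bᵀ D + τ • 1) *ᵥ w = Sum.elim (0 : m → ℝ) (Bᵀ *ᵥ θx)) :
    spuriousCorrelation (fromBlocks A B Bᵀ D) τ θx = -τ * (θx ⬝ᵥ w ∘ Sum.inl) := by
  have hSw : fromBlocks A B Bᵀ D *ᵥ w = Sum.elim (0 : m → ℝ) (Bᵀ *ᵥ θx) - τ • w := by
    rw [← hw, add_mulVec, smul_mulVec, one_mulVec, add_sub_cancel_right]
  rw [spuriousCorrelation_eq_dotProduct_mulVec hSig hτ hw, hSw]
  simp [dotProduct, Fintype.sum_sum_type, Finset.mul_sum, mul_left_comm]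

lemma sq_mul_sqNorm_le_sqNorm_transpose_mulVec (hSig : (fromBlocks A B Bᵀ D).PosDef)
    (hτ : 0 < τ)
    (hw : (fromBlocks A B Bᵀ D + τ • 1) *ᵥ w = Sum.elim (0 : m → ℝ) (Bᵀ *ᵥ θx)) :
    τ ^ 2 * sqNorm w ≤ sqNorm (Bᵀ *ᵥ θx) := by
  have h := dotProduct_add_smul_one_mulVec (fromBlocks A B Bᵀ D) τ w
  rw [hw] at h
  simpa using sq_mul_sqNorm_le hτ (y := Sum.elim (0 : m → ℝ) (Bᵀ *ᵥ θx))
    (by linarith [hSig.posSemidef.dotProduct_mulVec_self_nonneg w])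

lemma abs_spuriousCorrelation_le_opNorm (hSig : (fromBlocks A B Bᵀ D).PosDef) (hτ : 0 < τ)
    (hw : (fromBlocks A B Bᵀ D + τ • 1) *ᵥ w = Sum.elim (0 : m → ℝ) (Bᵀ *ᵥ θx))
    (hθ : sqNorm θx = 1) :
    |spuriousCorrelation (fromBlocks A B Bᵀ D) τ θx| ≤ opNorm Bᵀ := by
  refine abs_le_of_sq_le_sq ?_ (opNorm_nonneg Bᵀ)
  calc spuriousCorrelation (fromBlocks A B Bᵀ D) τ θx ^ 2
      = τ ^ 2 * (θx ⬝ᵥ w ∘ Sum.inl) ^ 2 := by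
        rw [spuriousCorrelation_eq_neg_mul hSig hτ.le hw]
        ring
    _ ≤ τ ^ 2 * (sqNorm θx * sqNorm (w ∘ Sum.inl)) := by
        gcongr
        exact dotProduct_sq_le_sqNorm_mul_sqNorm _ _
    _ ≤ τ ^ 2 * sqNorm w := by
        rw [hθ, one_mul]
        gcongr
        exact sqNorm_comp_inl_le w
    _ ≤ sqNorm (Bᵀ *ᵥ θx) := sq_mul_sqNorm_le_sqNorm_transpose_mulVec hSig hτ hw
    _ ≤ opNorm Bᵀ ^ 2 := sqNorm_mulVec_le_opNorm_sq Bᵀ hθ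

lemma abs_spuriousCorrelation_le_lmax_sq_div (hSig : (fromBlocks A B Bᵀ D).PosDef)
    (hτ : 0 < τ)
    (hw : (fromBlocks A B Bᵀ D + τ • 1) *ᵥ w = Sum.elim (0 : m → ℝ) (Bᵀ *ᵥ θx))
    (hθ : sqNorm θx = 1) :
    |spuriousCorrelation (fromBlocks A B Bᵀ D) τ θx| ≤ lmax (fromBlocks A B Bᵀ D) ^ 2 / τ := by
  set g := fromBlocks A B Bᵀ D *ᵥ Sum.elim θx 0
  set l := lmax (fromBlocks A B Bᵀ D)
  have hC : spuriousCorrelation (fromBlocks A B Bᵀ D) τ θx = g ⬝ᵥ w := by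
    rw [spuriousCorrelation_eq_dotProduct_mulVec hSig hτ.le hw,
      dotProduct_mulVec_comm (isHermitian_iff_isSymm.mp hSig.1), dotProduct_comm]
  have hg : sqNorm g ≤ l ^ 2 := by
    simpa [hθ] using hSig.posSemidef.sqNorm_mulVec_le (Sum.elim θx 0)
  have hgB : sqNorm (Bᵀ *ᵥ θx) ≤ sqNorm g := by
    simp [g, fromBlocks_mulVec, sqNorm_nonneg]
  have hCτ : (spuriousCorrelation (fromBlocks A B Bᵀ D) τ θx * τ) ^ 2 ≤ (l ^ 2) ^ 2 :=
    calc (spuriousCorrelation (fromBlocks A B Bᵀ D) τ θx * τ) ^ 2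
        = (g ⬝ᵥ w) ^ 2 * τ ^ 2 := by rw [hC, mul_pow]
      _ ≤ sqNorm g * sqNorm w * τ ^ 2 := by
        gcongr
        exact dotProduct_sq_le_sqNorm_mul_sqNorm g w
      _ = sqNorm g * (τ ^ 2 * sqNorm w) := by ring
      _ ≤ sqNorm g * sqNorm g := mul_le_mul_of_nonneg_left
        ((sq_mul_sqNorm_le_sqNorm_transpose_mulVec hSig hτ hw).trans hgB) (sqNorm_nonneg g)
      _ ≤ l ^ 2 * l ^ 2 := mul_le_mul hg hg (sqNorm_nonneg g) (sq_nonneg l)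
      _ = (l ^ 2) ^ 2 := by ring
  rw [le_div_iff₀ hτ, ← abs_of_pos hτ, ← abs_mul, abs_of_pos hτ]
  exact abs_le_of_sq_le_sq hCτ (sq_nonneg l)

lemma dotProduct_comp_inl_eq_neg (hA : A.IsSymm) {z : m → ℝ} (hz : (A + τ • 1) *ᵥ z = θx)
    (hw : (fromBlocks A B Bᵀ D + τ • 1) *ᵥ w = Sum.elim (0 : m → ℝ) (Bᵀ *ᵥ θx)) :
    θx ⬝ᵥ w ∘ Sum.inl = -((Bᵀ *ᵥ z) ⬝ᵥ w ∘ Sum.inr) := by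
  have hrow : (A + τ • 1) *ᵥ (w ∘ Sum.inl) + B *ᵥ (w ∘ Sum.inr) = 0 := by
    have h := congrArg (· ∘ Sum.inl) hw
    rw [← fromBlocks_one, fromBlocks_smul, fromBlocks_add, fromBlocks_mulVec] at h
    simpa using h
  have hsymm : (A + τ • 1).IsSymm := hA.add (isSymm_one.smul τ)
  rw [← hz, dotProduct_comm, dotProduct_mulVec_comm hsymm, eq_neg_of_add_eq_zero_left hrow,
    dotProduct_neg, ← dotProduct_transpose_mulVec, dotProduct_comm]

lemma lmin_sq_mul_sqNorm_comp_inr_le [Nonempty n] (hSig : (fromBlocks A B Bᵀ D).PosDef)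
    (hτ : 0 ≤ τ)
    (hw : (fromBlocks A B Bᵀ D + τ • 1) *ᵥ w = Sum.elim (0 : m → ℝ) (Bᵀ *ᵥ θx)) :
    lmin (D - Bᵀ * A⁻¹ * B) ^ 2 * sqNorm (w ∘ Sum.inr) ≤ sqNorm (Bᵀ *ᵥ θx) := by
  have hN := dotProduct_add_smul_one_mulVec (fromBlocks A B Bᵀ D) τ w
  have hwb : w ⬝ᵥ Sum.elim (0 : m → ℝ) (Bᵀ *ᵥ θx) = (w ∘ Sum.inr) ⬝ᵥ (Bᵀ *ᵥ θx) := by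
    simp [dotProduct, Fintype.sum_sum_type]
  rw [hw, hwb] at hN
  refine sq_mul_sqNorm_le (lmin_pos hSig.schur_of_fromBlocks) ?_
  linarith [lmin_mul_le_dotProduct_mulVec (D - Bᵀ * A⁻¹ * B) (w ∘ Sum.inr),
    dotProduct_schur_mulVec_le hSig w, mul_nonneg hτ (sqNorm_nonneg w)]

lemma lmin_mul_lmin_sq_mul_sq_spuriousCorrelation_le [Nonempty m] [Nonempty n]
    (hSig : (fromBlocks A B Bᵀ D).PosDef) (hτ : 0 < τ)
    (hw : (fromBlocks A B Bᵀ D + τ • 1) *ᵥ w = Sum.elim (0 : m → ℝ) (Bᵀ *ᵥ θx))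
    (hθ : sqNorm θx = 1) :
    lmin A * lmin (D - Bᵀ * A⁻¹ * B) ^ 2 * spuriousCorrelation (fromBlocks A B Bᵀ D) τ θx ^ 2 ≤
      τ ^ 2 * (lmax D - lmin (D - Bᵀ * A⁻¹ * B)) ^ 2 * (θx ⬝ᵥ A *ᵥ θx) := by
  have hA := hSig.of_fromBlocks₁₁
  have hlA := lmin_pos hA
  set S := D - Bᵀ * A⁻¹ * B
  set gap := lmax D - lmin S
  have hgap : 0 ≤ gap := sub_nonneg.mpr (lmin_schur_le_lmax hSig)
  set z := (A + τ • 1)⁻¹ *ᵥ θx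
  have hz : (A + τ • 1) *ᵥ z = θx := (hA.add_smul_one hτ.le).mulVec_inv_mulVec θx
  have hC : spuriousCorrelation (fromBlocks A B Bᵀ D) τ θx =
      τ * ((Bᵀ *ᵥ z) ⬝ᵥ w ∘ Sum.inr) := by
    rw [spuriousCorrelation_eq_neg_mul hSig hτ.le hw,
      dotProduct_comp_inl_eq_neg (isHermitian_iff_isSymm.mp hA.1) hz hw]
    ring
  have hv : lmin A * sqNorm (Bᵀ *ᵥ z) ≤ gap :=
    calc lmin A * sqNorm (Bᵀ *ᵥ z) ≤ lmin A * (gap * (z ⬝ᵥ A *ᵥ z)) :=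
          mul_le_mul_of_nonneg_left (sqNorm_transpose_mulVec_le hSig z) hlA.le
      _ = gap * (lmin A * (z ⬝ᵥ A *ᵥ z)) := by ring
      _ ≤ gap * 1 := by
          gcongr
          simpa [hθ] using lmin_mul_dotProduct_mulVec_le hlA hτ.le hz
      _ = gap := mul_one gap
  have hwy : lmin S ^ 2 * sqNorm (w ∘ Sum.inr) ≤ gap * (θx ⬝ᵥ A *ᵥ θx) :=
    (lmin_sq_mul_sqNorm_comp_inr_le hSig hτ.le hw).trans (sqNorm_transpose_mulVec_le hSig θx)
  calc lmin A * lmin S ^ 2 * spuriousCorrelation (fromBlocks A B Bᵀ D) τ θx ^ 2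
      = τ ^ 2 * lmin A * lmin S ^ 2 * ((Bᵀ *ᵥ z) ⬝ᵥ w ∘ Sum.inr) ^ 2 := by
        rw [hC]
        ring
    _ ≤ τ ^ 2 * lmin A * lmin S ^ 2 * (sqNorm (Bᵀ *ᵥ z) * sqNorm (w ∘ Sum.inr)) := by
        gcongr
        exact dotProduct_sq_le_sqNorm_mul_sqNorm _ _
    _ = τ ^ 2 * (lmin A * sqNorm (Bᵀ *ᵥ z)) * (lmin S ^ 2 * sqNorm (w ∘ Sum.inr)) := by ring
    _ ≤ τ ^ 2 * gap * (gap * (θx ⬝ᵥ A *ᵥ θx)) := by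
        gcongr
        exact mul_nonneg (sq_nonneg _) (sqNorm_nonneg _)
    _ = τ ^ 2 * gap ^ 2 * (θx ⬝ᵥ A *ᵥ θx) := by ring

lemma abs_spuriousCorrelation_le_schur [Nonempty m] [Nonempty n]
    (hSig : (fromBlocks A B Bᵀ D).PosDef) (hτ : 0 < τ)
    (hw : (fromBlocks A B Bᵀ D + τ • 1) *ᵥ w = Sum.elim (0 : m → ℝ) (Bᵀ *ᵥ θx))
    (hθ : sqNorm θx = 1) :
    |spuriousCorrelation (fromBlocks A B Bᵀ D) τ θx| ≤
      τ * √(θx ⬝ᵥ A *ᵥ θx) * (lmax D - lmin (D - Bᵀ * A⁻¹ * B)) /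
        (lmin (D - Bᵀ * A⁻¹ * B) * √(lmin A)) := by
  have hA := hSig.of_fromBlocks₁₁
  have hlA := lmin_pos hA
  have hlS := lmin_pos hSig.schur_of_fromBlocks
  have ht := hA.posSemidef.dotProduct_mulVec_self_nonneg θx
  have hgap := sub_nonneg.mpr (lmin_schur_le_lmax hSig)
  refine abs_le_of_sq_le_sq ?_ (by positivity)
  rw [div_pow, mul_pow, mul_pow, mul_pow, Real.sq_sqrt ht, Real.sq_sqrt hlA.le,
    le_div_iff₀ (by positivity)]
  linarith [lmin_mul_lmin_sq_mul_sq_spuriousCorrelation_le hSig hτ hw hθ]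

end SpuriousCorrelation

/-- Bounds on the deterministic equivalent of the spurious correlation:
`|C^Σ| ≤ min(‖Σ_yx‖_op, λmax(Σ)²/τ, τ √(θ*_xᵀ Σ_xx θ*_x) (λmax(Σ_yy) − λmin(S)) /
(λmin(S) √(λmin(Σ_xx))))`, where `S` is the Schur complement of `Σ` w.r.t. `Σ_xx`. -/
theorem bounds_on_deterministic_spurious_correlation
    (d : ℕ) (Sxx Sxy Syx Syy : Matrix (Fin d) (Fin d) ℝ)
    (Sig : Matrix (Fin d ⊕ Fin d) (Fin d ⊕ Fin d) ℝ)
    (hSig : Sig = Matrix.fromBlocks Sxx Sxy Syx Syy)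
    (hpd : Sig.PosDef)
    (θx : Fin d → ℝ) (hθ : sqNorm (Sum.elim θx (0 : Fin d → ℝ)) = 1)
    (S : Matrix (Fin d) (Fin d) ℝ) (hS : S = Syy - Syx * Sxx⁻¹ * Sxy)
    (τ : ℝ) (hτ : 0 < τ) :
    |dotProduct (Sum.elim θx (0 : Fin d → ℝ))
        ((Sig * (Sig + τ • 1)⁻¹ * Py d * Sig).mulVec (Sum.elim θx 0))| ≤
      min (opNorm Syx)
        (min (lmax Sig ^ 2 / τ)
          (τ * Real.sqrt (dotProduct θx (Sxx.mulVec θx)) *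
            (lmax Syy - lmin S) / (lmin S * Real.sqrt (lmin Sxx)))) := by
  have hsymm : Sigᵀ = Sig := (isHermitian_iff_isSymm.mp hpd.1).eq
  obtain rfl : Syx = Sxyᵀ := by
    rw [hSig, fromBlocks_transpose] at hsymm
    exact (fromBlocks_inj.mp hsymm).2.2.1.symm
  subst hSig hS
  have hθx : sqNorm θx = 1 := by simpa using hθ
  have : Nonempty (Fin d) := by
    by_contra h
    have := not_nonempty_iff.mp h
    simp [sqNorm] at hθx
  have hw := (hpd.add_smul_one hτ.le).mulVec_inv_mulVec (Sum.elim (0 : Fin d → ℝ) (Sxyᵀ *ᵥ θx))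
  change |spuriousCorrelation _ τ θx| ≤ _
  exact le_min (abs_spuriousCorrelation_le_opNorm hpd hτ hw hθx)
    (le_min (abs_spuriousCorrelation_le_lmax_sq_div hpd hτ hw hθx)
      (abs_spuriousCorrelation_le_schur hpd hτ hw hθx))

end
end

section
/- Let A, B, W be square-integrable real random variables on a common probability space with E[A] = E[B] = E[W] = 0, E[A²] = E[B²] = E[W²] = 1, and Cov(B, W) = 0. Then E[(A − B)²] ≥ 2 − 2√(1 − Cov(A, W)²). -/
/-!
In `L²(μ)` the hypotheses say that `B` and `W` are orthonormal and `A` is a unit vector.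
Bessel's inequality for the pair `B, W` gives `⟪A, B⟫² + ⟪A, W⟫² ≤ 1`, hence
`⟪A, B⟫ ≤ √(1 - ⟪A, W⟫²)`, and `‖A - B‖² = 2 - 2 ⟪A, B⟫`.
-/

open MeasureTheory
open scoped InnerProductSpace

section InnerProductSpace

variable {E : Type*} [NormedAddCommGroup E] [InnerProductSpace ℝ E]

theorem inner_sq_add_inner_sq_le_norm_sq {b w : E} (a : E) (hb : ‖b‖ = 1) (hw : ‖w‖ = 1)
    (hbw : ⟪b, w⟫_ℝ = 0) : ⟪a, b⟫_ℝ ^ 2 + ⟪a, w⟫_ℝ ^ 2 ≤ ‖a‖ ^ 2 := by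
  have hv : Orthonormal ℝ ![b, w] := by simp [hb, hw, hbw]
  simpa [Fin.sum_univ_two, real_inner_comm a] using
    hv.sum_inner_products_le a (s := Finset.univ)

theorem inner_le_sqrt_norm_sq_sub_inner_sq {b w : E} (a : E) (hb : ‖b‖ = 1) (hw : ‖w‖ = 1)
    (hbw : ⟪b, w⟫_ℝ = 0) : ⟪a, b⟫_ℝ ≤ √(‖a‖ ^ 2 - ⟪a, w⟫_ℝ ^ 2) :=
  Real.le_sqrt_of_sq_le <| by linarith [inner_sq_add_inner_sq_le_norm_sq a hb hw hbw]

end InnerProductSpace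

namespace MeasureTheory.MemLp

variable {Ω : Type*} [MeasurableSpace Ω] {μ : Measure Ω} {f g : Ω → ℝ}

theorem inner_toLp (hf : MemLp f 2 μ) (hg : MemLp g 2 μ) :
    ⟪hf.toLp f, hg.toLp g⟫_ℝ = ∫ ω, f ω * g ω ∂μ := by
  rw [L2.inner_def]
  refine integral_congr_ae ?_
  filter_upwards [hf.coeFn_toLp, hg.coeFn_toLp] with ω hfω hgω
  rw [hfω, hgω, Real.inner_apply]

theorem norm_toLp_sq (hf : MemLp f 2 μ) : ‖hf.toLp f‖ ^ 2 = ∫ ω, f ω ^ 2 ∂μ := by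
  rw [← real_inner_self_eq_norm_sq, inner_toLp]
  simp_rw [sq]

end MeasureTheory.MemLp

theorem ood_loss_lower_bound_general
    {Ω : Type*} [MeasurableSpace Ω] (μ : Measure Ω)
    (A B W : Ω → ℝ)
    (hA : MemLp A 2 μ) (hB : MemLp B 2 μ) (hW : MemLp W 2 μ)
    (hA2 : ∫ ω, (A ω) ^ 2 ∂μ = 1) (hB2 : ∫ ω, (B ω) ^ 2 ∂μ = 1)
    (hW2 : ∫ ω, (W ω) ^ 2 ∂μ = 1)
    (hBW : ∫ ω, B ω * W ω ∂μ = 0) :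
    2 - 2 * Real.sqrt (1 - (∫ ω, A ω * W ω ∂μ) ^ 2) ≤ ∫ ω, (A ω - B ω) ^ 2 ∂μ := by
  rw [← hA.norm_toLp_sq] at hA2
  rw [← hB.norm_toLp_sq, pow_eq_one_iff_of_nonneg (norm_nonneg _) two_ne_zero] at hB2
  rw [← hW.norm_toLp_sq, pow_eq_one_iff_of_nonneg (norm_nonneg _) two_ne_zero] at hW2
  rw [← hB.inner_toLp hW] at hBW
  have hdist : ∫ ω, (A ω - B ω) ^ 2 ∂μ = ‖hA.toLp A - hB.toLp B‖ ^ 2 := by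
    rw [← MemLp.toLp_sub]
    exact ((hA.sub hB).norm_toLp_sq).symm
  have hAB := inner_le_sqrt_norm_sq_sub_inner_sq (hA.toLp A) hB2 hW2 hBW
  rw [hdist, norm_sub_sq_real, hA2, hB2, ← hA.inner_toLp hW]
  rw [hA2] at hAB
  linarith

/-- Abstract out-of-distribution loss lower bound: if `A, B, W` are
square-integrable, centered with unit second moment, and `Cov(B, W) = 0`, then
`E[(A − B)²] ≥ 2 − 2√(1 − Cov(A, W)²)`. -/
theorem ood_loss_lower_bound
    {Ω : Type*} [MeasurableSpace Ω] (μ : Measure Ω) [IsProbabilityMeasure μ]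
    (A B W : Ω → ℝ)
    (hA : MemLp A 2 μ) (hB : MemLp B 2 μ) (hW : MemLp W 2 μ)
    (hAmean : ∫ ω, A ω ∂μ = 0) (hBmean : ∫ ω, B ω ∂μ = 0) (hWmean : ∫ ω, W ω ∂μ = 0)
    (hA2 : ∫ ω, (A ω) ^ 2 ∂μ = 1) (hB2 : ∫ ω, (B ω) ^ 2 ∂μ = 1)
    (hW2 : ∫ ω, (W ω) ^ 2 ∂μ = 1)
    (hBW : ∫ ω, B ω * W ω ∂μ = 0) :
    2 - 2 * Real.sqrt (1 - (∫ ω, A ω * W ω ∂μ) ^ 2) ≤ ∫ ω, (A ω - B ω) ^ 2 ∂μ :=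
  ood_loss_lower_bound_general μ A B W hA hB hW hA2 hB2 hW2 hBW
end

section
/- Let m be a positive integer and z a mean-zero random vector in ℝ^m such that for every 1-Lipschitz function f: ℝ^m → ℝ, the random variable f(z) − E[f(z)] has sub-Gaussian ψ₂-norm at most K₀, and such that E[‖z‖₂²] = m. Then the random variable ‖z‖₂ − √m is sub-Gaussian with ψ₂-norm at most C(K₀), where C(K₀) depends only on K₀ (one may take C(K₀) ≤ C(K₀ + K₀²) for an absolute constant C). -/
open MeasureTheory ProbabilityTheory Filter

noncomputable section

/-- The ψ₂ (sub-Gaussian) norm of `X` under `μ` is at most `K`. -/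
def SubGBound {Ω : Type*} [MeasurableSpace Ω] (μ : Measure Ω) (X : Ω → ℝ) (K : ℝ) : Prop :=
  0 < K ∧ ∫ ω, Real.exp ((X ω) ^ 2 / K ^ 2) ∂μ ≤ 2

set_option maxHeartbeats 1000000 in
/-- Norm concentration for Lipschitz-concentrated vectors: if `z` is a
mean-zero random vector in `ℝ^m` such that `f(z) − E[f(z)]` has ψ₂-norm at most `K₀` for every
1-Lipschitz `f`, and `E[‖z‖²] = m`, then `‖z‖ − √m` is sub-Gaussian with ψ₂-norm at most
`C(K₀ + K₀²)` for an absolute constant `C`. -/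
theorem norm_concentration_of_lipschitz_concentrated :
    ∃ C : ℝ, 0 < C ∧
    ∀ (K₀ : ℝ), 0 < K₀ →
    ∀ (m : ℕ), 0 < m →
    ∀ {Ω : Type} [MeasurableSpace Ω] (μ : Measure Ω) [IsProbabilityMeasure μ]
      (z : Ω → EuclideanSpace ℝ (Fin m)),
      Measurable z →
      Integrable z μ →
      (∫ ω, z ω ∂μ) = 0 →
      (∀ f : EuclideanSpace ℝ (Fin m) → ℝ, LipschitzWith 1 f →
        SubGBound μ (fun ω => f (z ω) - ∫ ω', f (z ω') ∂μ) K₀) →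
      (∫ ω, ‖z ω‖ ^ 2 ∂μ) = (m : ℝ) →
      SubGBound μ (fun ω => ‖z ω‖ - Real.sqrt m) (C * (K₀ + K₀ ^ 2)) := by
  refine ⟨4, by norm_num, ?_⟩
  intro K₀ hK₀ m hm Ω _inst μ _instP z hzmeas hzint _hz0 hlip hnorm2
  set s : ℝ := K₀ + K₀ ^ 2 with hs
  have hs0 : 0 < s := by positivity
  have hc0 : (0:ℝ) < 1 + K₀ := by linarith
  set N : Ω → ℝ := fun ω => ‖z ω‖ with hNdef
  have hNmeas : Measurable N := hzmeas.norm
  have hNint : Integrable N μ := hzint.norm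
  have hNnn : ∀ ω, 0 ≤ N ω := fun ω => norm_nonneg _
  set b : ℝ := ∫ ω, N ω ∂μ with hbdef
  set Y : Ω → ℝ := fun ω => Real.exp ((N ω - b) ^ 2 / s ^ 2) with hYdef
  -- truncated means
  set bn : ℕ → ℝ := fun n => ∫ ω, min (N ω) (n : ℝ) ∂μ with hbndef
  have hminmeas : ∀ n : ℕ, Measurable fun ω => min (N ω) (n : ℝ) :=
    fun n => hNmeas.min measurable_const
  have hminnn : ∀ (n : ℕ) (ω : Ω), 0 ≤ min (N ω) (n : ℝ) :=
    fun n ω => le_min (hNnn ω) (n.cast_nonneg)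
  have hminint : ∀ n : ℕ, Integrable (fun ω => min (N ω) (n : ℝ)) μ := by
    intro n
    refine Integrable.mono' (integrable_const (n : ℝ)) (hminmeas n).aestronglyMeasurable ?_
    filter_upwards with ω
    rw [Real.norm_eq_abs, abs_of_nonneg (hminnn n ω)]
    exact min_le_right _ _
  have hbn_nn : ∀ n : ℕ, 0 ≤ bn n := fun n => integral_nonneg (hminnn n)
  have hbn_le : ∀ n : ℕ, bn n ≤ n := by
    intro n
    have h := integral_mono (μ := μ) (hminint n) (integrable_const (n:ℝ)) (fun ω => min_le_right _ _)
    simpa using h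
  -- integrability of the truncated exponentials
  have hgnmeas : ∀ n : ℕ, Measurable fun ω =>
      Real.exp ((min (N ω) (n : ℝ) - bn n) ^ 2 / s ^ 2) := by
    intro n
    exact ((((hminmeas n).sub measurable_const).pow measurable_const).div_const _).exp
  have hgnint : ∀ n : ℕ, Integrable
      (fun ω => Real.exp ((min (N ω) (n : ℝ) - bn n) ^ 2 / s ^ 2)) μ := by
    intro n
    refine Integrable.mono' (integrable_const (Real.exp ((n : ℝ) ^ 2 / s ^ 2)))
      (hgnmeas n).aestronglyMeasurable ?_
    filter_upwards with ω
    rw [Real.norm_eq_abs, abs_of_nonneg (Real.exp_pos _).le]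
    apply Real.exp_le_exp.2
    have hle : (min (N ω) (n:ℝ) - bn n) ^ 2 ≤ (n:ℝ) ^ 2 := by
      nlinarith [hminnn n ω, hbn_nn n, hbn_le n, min_le_right (N ω) (n:ℝ)]
    gcongr
  -- the hypothesis applied to truncated rescaled norms
  have key : ∀ n : ℕ, ∫ ω, Real.exp ((min (N ω) (n : ℝ) - bn n) ^ 2 / s ^ 2) ∂μ ≤ 2 := by
    intro n
    have hlipf : LipschitzWith 1 (fun x : EuclideanSpace ℝ (Fin m) => min ‖x‖ (n : ℝ) / (1 + K₀)) := by
      apply LipschitzWith.of_dist_le_mul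
      intro x y
      rw [Real.dist_eq, NNReal.coe_one, one_mul]
      have h1 : |min ‖x‖ (n:ℝ) / (1 + K₀) - min ‖y‖ (n:ℝ) / (1 + K₀)|
          = |min ‖x‖ (n:ℝ) - min ‖y‖ (n:ℝ)| / (1 + K₀) := by
        rw [div_sub_div_same, abs_div, abs_of_pos hc0]
      rw [h1]
      have h2 : |min ‖x‖ (n:ℝ) - min ‖y‖ (n:ℝ)| ≤ |‖x‖ - ‖y‖| := by
        have := abs_min_sub_min_le_max ‖x‖ (n:ℝ) ‖y‖ (n:ℝ)
        simpa using this
      have h3 : |‖x‖ - ‖y‖| ≤ dist x y := by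
        rw [dist_eq_norm]; exact abs_norm_sub_norm_le x y
      have h4 : |min ‖x‖ (n:ℝ) - min ‖y‖ (n:ℝ)| / (1 + K₀) ≤ |min ‖x‖ (n:ℝ) - min ‖y‖ (n:ℝ)| :=
        div_le_self (abs_nonneg _) (by linarith)
      exact h4.trans (h2.trans h3)
    have h2 := (hlip _ hlipf).2
    have hmean : (∫ ω', min ‖z ω'‖ (n:ℝ) / (1 + K₀) ∂μ) = bn n / (1 + K₀) := by
      rw [integral_div]
    have heq : ∀ u : ℝ, (u / (1 + K₀) - bn n / (1 + K₀)) ^ 2 / K₀ ^ 2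
        = (u - bn n) ^ 2 / s ^ 2 := by
      intro u
      rw [div_sub_div_same, div_pow, div_div]
      congr 1
      rw [hs]; ring
    refine le_trans (le_of_eq ?_) h2
    refine integral_congr_ae (Filter.EventuallyEq.of_eq (funext fun ω => ?_))
    simp only [hmean]
    exact congrArg Real.exp (heq (min ‖z ω‖ (n:ℝ))).symm
  -- pointwise convergence of the truncations
  have hminlim : ∀ ω, Tendsto (fun n : ℕ => min (N ω) (n : ℝ)) atTop (nhds (N ω)) := by
    intro ω
    have hev : ∀ᶠ n : ℕ in atTop, (fun _ : ℕ => N ω) n = min (N ω) (n : ℝ) := by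
      filter_upwards [eventually_ge_atTop ⌈N ω⌉₊] with n hn
      exact (min_eq_left ((Nat.le_ceil _).trans (by exact_mod_cast hn))).symm
    exact Tendsto.congr' hev tendsto_const_nhds
  have hbtend : Tendsto bn atTop (nhds b) := by
    refine tendsto_integral_of_dominated_convergence N
      (fun n => (hminmeas n).aestronglyMeasurable) hNint ?_ ?_
    · intro n
      filter_upwards with ω
      rw [Real.norm_eq_abs, abs_of_nonneg (hminnn n ω)]
      exact min_le_left _ _
    · filter_upwards with ω
      exact hminlim ω
  have hlim : ∀ ω, Tendsto
      (fun n : ℕ => ENNReal.ofReal (Real.exp ((min (N ω) (n : ℝ) - bn n) ^ 2 / s ^ 2)))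
      atTop (nhds (ENNReal.ofReal (Y ω))) := by
    intro ω
    apply (ENNReal.continuous_ofReal.tendsto _).comp
    apply (Real.continuous_exp.tendsto _).comp
    exact Tendsto.div_const (((hminlim ω).sub hbtend).pow 2) _
  have hfatou : ∫⁻ ω, ENNReal.ofReal (Y ω) ∂μ ≤ 2 := by
    have h1 : ∫⁻ ω, ENNReal.ofReal (Y ω) ∂μ
        = ∫⁻ ω, liminf (fun n : ℕ =>
            ENNReal.ofReal (Real.exp ((min (N ω) (n : ℝ) - bn n) ^ 2 / s ^ 2))) atTop ∂μ :=
      lintegral_congr fun ω => ((hlim ω).liminf_eq).symm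
    rw [h1]
    refine le_trans (lintegral_liminf_le fun n => (hgnmeas n).ennreal_ofReal) ?_
    have h2 : ∀ n : ℕ, ∫⁻ ω, ENNReal.ofReal
        (Real.exp ((min (N ω) (n : ℝ) - bn n) ^ 2 / s ^ 2)) ∂μ ≤ 2 := by
      intro n
      rw [← ofReal_integral_eq_lintegral_ofReal (hgnint n)
        (Filter.Eventually.of_forall fun ω => (Real.exp_pos _).le)]
      calc ENNReal.ofReal (∫ ω, Real.exp ((min (N ω) (n : ℝ) - bn n) ^ 2 / s ^ 2) ∂μ)
          ≤ ENNReal.ofReal 2 := ENNReal.ofReal_le_ofReal (key n)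
        _ = 2 := by norm_num
    refine le_trans (liminf_le_liminf (Filter.Eventually.of_forall h2)) ?_
    simp
  have hYmeas : Measurable Y :=
    (((hNmeas.sub measurable_const).pow measurable_const).div_const _).exp
  have hYnn : ∀ ω, 0 ≤ Y ω := fun ω => (Real.exp_pos _).le
  have hYint : Integrable Y μ := by
    refine ⟨hYmeas.aestronglyMeasurable, ?_⟩
    rw [hasFiniteIntegral_iff_ofReal (Filter.Eventually.of_forall hYnn)]
    exact lt_of_le_of_lt hfatou (by norm_num)
  have hYle : ∫ ω, Y ω ∂μ ≤ 2 := by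
    rw [integral_eq_lintegral_of_nonneg_ae (Filter.Eventually.of_forall hYnn)
      hYmeas.aestronglyMeasurable]
    calc (∫⁻ ω, ENNReal.ofReal (Y ω) ∂μ).toReal ≤ (2 : ENNReal).toReal :=
        ENNReal.toReal_mono (by norm_num) hfatou
      _ = 2 := by norm_num
  -- second moment of X := N - b
  have hXptle : ∀ ω, (N ω - b) ^ 2 ≤ s ^ 2 * Y ω := by
    intro ω
    have h1 : (N ω - b) ^ 2 / s ^ 2 + 1 ≤ Y ω := Real.add_one_le_exp _
    have h3 : s ^ 2 * ((N ω - b) ^ 2 / s ^ 2) = (N ω - b) ^ 2 := by field_simp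
    calc (N ω - b) ^ 2 = s ^ 2 * ((N ω - b) ^ 2 / s ^ 2) := h3.symm
      _ ≤ s ^ 2 * Y ω := mul_le_mul_of_nonneg_left (by linarith) (sq_nonneg s)
  have hX2int : Integrable (fun ω => (N ω - b) ^ 2) μ := by
    refine Integrable.mono' (hYint.const_mul (s ^ 2))
      (((hNmeas.sub measurable_const).pow measurable_const).aestronglyMeasurable) ?_
    filter_upwards with ω
    rw [Real.norm_eq_abs, abs_of_nonneg (sq_nonneg _)]
    exact hXptle ω
  have hX2le : ∫ ω, (N ω - b) ^ 2 ∂μ ≤ s ^ 2 := by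
    have h1 : ∫ ω, (N ω - b) ^ 2 ∂μ ≤ ∫ ω, s ^ 2 * (Y ω - 1) ∂μ := by
      refine integral_mono hX2int ((hYint.sub (integrable_const 1)).const_mul _) ?_
      intro ω
      have h1 : (N ω - b) ^ 2 / s ^ 2 + 1 ≤ Y ω := Real.add_one_le_exp _
      have h3 : s ^ 2 * ((N ω - b) ^ 2 / s ^ 2) = (N ω - b) ^ 2 := by field_simp
      calc (N ω - b) ^ 2 = s ^ 2 * ((N ω - b) ^ 2 / s ^ 2) := h3.symm
        _ ≤ s ^ 2 * (Y ω - 1) := mul_le_mul_of_nonneg_left (by linarith) (sq_nonneg s)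
    have h2 : ∫ ω, s ^ 2 * (Y ω - 1) ∂μ = s ^ 2 * ((∫ ω, Y ω ∂μ) - 1) := by
      rw [integral_const_mul, integral_sub hYint (integrable_const 1)]
      simp
    rw [h2] at h1
    nlinarith
  -- N^2 is integrable
  have hN2int : Integrable (fun ω => N ω ^ 2) μ := by
    by_contra hcon
    have : ∫ ω, N ω ^ 2 ∂μ = 0 := integral_undef hcon
    rw [hNdef] at this
    simp only [this] at hnorm2
    have : (0:ℝ) < m := by exact_mod_cast hm
    linarith [hnorm2, this]
  have hX2eq : ∫ ω, (N ω - b) ^ 2 ∂μ = m - b ^ 2 := by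
    have hexp : (fun ω => (N ω - b) ^ 2) = fun ω => (N ω ^ 2 - 2 * b * N ω) + b ^ 2 := by
      funext ω; ring
    have hint1 : Integrable (fun ω => N ω ^ 2 - 2 * b * N ω) μ :=
      hN2int.sub (hNint.const_mul (2 * b))
    rw [hexp, integral_add hint1 (integrable_const _),
      integral_sub hN2int (hNint.const_mul (2 * b)), integral_const_mul, integral_const]
    have hm2 : ∫ ω, N ω ^ 2 ∂μ = (m:ℝ) := hnorm2
    rw [hm2, ← hbdef]
    simp [measure_univ]
    ring
  have hbnn : 0 ≤ b := integral_nonneg hNnn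
  have hX2nn : 0 ≤ ∫ ω, (N ω - b) ^ 2 ∂μ := integral_nonneg fun ω => sq_nonneg _
  have hb2 : b ^ 2 ≤ m := by nlinarith
  have hble : b ≤ Real.sqrt m := by
    rw [show b = Real.sqrt (b ^ 2) by rw [Real.sqrt_sq hbnn]]
    exact Real.sqrt_le_sqrt hb2
  have hmnn : (0:ℝ) ≤ m := by positivity
  have ha2 : (b - Real.sqrt m) ^ 2 ≤ s ^ 2 := by
    nlinarith [Real.sq_sqrt hmnn, Real.sqrt_nonneg (m:ℝ)]
  -- convexity of exp
  have hconv : ∀ u : ℝ, Real.exp ((1/8 : ℝ) * u) ≤ 7/8 + (1/8 : ℝ) * Real.exp u := by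
    intro u
    have := convexOn_exp.2 (Set.mem_univ (0:ℝ)) (Set.mem_univ u)
      (by norm_num : (0:ℝ) ≤ 7/8) (by norm_num : (0:ℝ) ≤ 1/8) (by norm_num)
    simpa using this
  have hexp18 : Real.exp (1/8 : ℝ) ≤ 8/7 := by
    have h := Real.add_one_le_exp (-(1/8) : ℝ)
    rw [show Real.exp (1/8 : ℝ) = (Real.exp (-(1/8):ℝ))⁻¹ by
      rw [← Real.exp_neg]; norm_num]
    rw [inv_le_comm₀ (Real.exp_pos _) (by norm_num)]
    linarith
  -- pointwise bound for the target
  have hpt : ∀ ω, Real.exp ((N ω - Real.sqrt m) ^ 2 / (4 * s) ^ 2)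
      ≤ (8/7) * (7/8 + (1/8 : ℝ) * Y ω) := by
    intro ω
    have hkey : (N ω - Real.sqrt m) ^ 2 ≤ 2 * (N ω - b) ^ 2 + 2 * s ^ 2 := by
      nlinarith [sq_nonneg ((N ω - b) - (b - Real.sqrt m)), ha2]
    have h1 : (N ω - Real.sqrt m) ^ 2 / (4 * s) ^ 2
        ≤ 1/8 + (1/8 : ℝ) * ((N ω - b) ^ 2 / s ^ 2) := by
      calc (N ω - Real.sqrt m) ^ 2 / (4 * s) ^ 2
          ≤ (2 * (N ω - b) ^ 2 + 2 * s ^ 2) / (4 * s) ^ 2 := by gcongr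
        _ = 1/8 + (1/8 : ℝ) * ((N ω - b) ^ 2 / s ^ 2) := by
            field_simp
            ring
    calc Real.exp ((N ω - Real.sqrt m) ^ 2 / (4 * s) ^ 2)
        ≤ Real.exp (1/8 + (1/8 : ℝ) * ((N ω - b) ^ 2 / s ^ 2)) := Real.exp_le_exp.2 h1
      _ = Real.exp (1/8 : ℝ) * Real.exp ((1/8 : ℝ) * ((N ω - b) ^ 2 / s ^ 2)) := by
          rw [← Real.exp_add]
      _ ≤ (8/7) * (7/8 + (1/8 : ℝ) * Y ω) := by
          have h2 := hconv ((N ω - b) ^ 2 / s ^ 2)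
          have h3 : (0:ℝ) ≤ 7/8 + (1/8 : ℝ) * Y ω := by
            have := hYnn ω; linarith
          have h4 : (0:ℝ) ≤ Real.exp ((1/8 : ℝ) * ((N ω - b) ^ 2 / s ^ 2)) :=
            (Real.exp_pos _).le
          exact mul_le_mul hexp18 h2 h4 (by norm_num)
  -- conclusion
  constructor
  · positivity
  · have htint : Integrable (fun ω => Real.exp ((N ω - Real.sqrt m) ^ 2 / (4 * s) ^ 2)) μ := by
      refine Integrable.mono' (((integrable_const (7/8 : ℝ)).add (hYint.const_mul (1/8))).const_mul (8/7))
        ((((hNmeas.sub measurable_const).pow measurable_const).div_const _).exp).aestronglyMeasurable ?_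
      filter_upwards with ω
      rw [Real.norm_eq_abs, abs_of_nonneg (Real.exp_pos _).le]
      exact hpt ω
    have hfinal : ∫ ω, Real.exp ((N ω - Real.sqrt m) ^ 2 / (4 * s) ^ 2) ∂μ ≤ 2 := by
      have h1 : ∫ ω, Real.exp ((N ω - Real.sqrt m) ^ 2 / (4 * s) ^ 2) ∂μ
          ≤ ∫ ω, (8/7) * (7/8 + (1/8 : ℝ) * Y ω) ∂μ := by
        exact integral_mono htint
          (((integrable_const (7/8 : ℝ)).add (hYint.const_mul (1/8))).const_mul (8/7)) hpt
      have h2 : ∫ ω, (8/7) * (7/8 + (1/8 : ℝ) * Y ω) ∂μ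
          = (8/7) * (7/8 + (1/8 : ℝ) * ∫ ω, Y ω ∂μ) := by
        rw [integral_const_mul, integral_add (integrable_const _) (hYint.const_mul _),
          integral_const_mul, integral_const]
        simp
      rw [h2] at h1
      nlinarith
    exact hfinal


end
end

section
/- Let Σ ∈ ℝ^{2d×2d} be symmetric positive definite with block decomposition Σ = [[Σ_xx, Σ_xy], [Σ_yx, Σ_yy]] into d×d blocks, let θ* = (θ*_xᵀ, 0ᵀ)ᵀ ∈ ℝ^{2d}, let P_y be the orthogonal projector onto the last d coordinates, and let τ > 0. Then θ*ᵀ Σ (Σ + τI)^{-1} P_y Σ θ* = τ · θ*_xᵀ (Σ_xx + τI)^{-1} Σ_xy ( Σ_yy + τI − Σ_yx (Σ_xx + τI)^{-1} Σ_xy )^{-1} Σ_yx θ*_x, i.e., the deterministic spurious-correlation functional equals τ times the corresponding expression involving the Schur complement of Σ + τI with respect to its top-left block. -/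
/-!
With `A = Σ + τI` one has `Σ A⁻¹ = I - τ A⁻¹`, and `P_y Σ θ* = (0, Σ_yx θ*_x)` is orthogonal to
`θ* = (θ*_x, 0)`. Hence the functional equals `-τ θ*_xᵀ [A⁻¹]_xy Σ_yx θ*_x`, and the
block-inversion formula `[A⁻¹]_xy = -(Σ_xx + τI)⁻¹ Σ_xy S⁻¹` for the Schur complement `S` finishes.
-/

open Matrix

noncomputable section

namespace Matrix

variable {m n α : Type*} [Fintype m] [Fintype n] [CommRing α]

theorem toBlocks₁₂_inv_fromBlocks [DecidableEq m] [DecidableEq n] {A : Matrix m m α}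
    {B : Matrix m n α} {C : Matrix n m α} {D : Matrix n n α} (hA : IsUnit A)
    (hM : IsUnit (fromBlocks A B C D)) :
    (fromBlocks A B C D)⁻¹.toBlocks₁₂ = -(A⁻¹ * B * (D - C * A⁻¹ * B)⁻¹) := by
  let := hA.invertible
  let := hM.invertible
  let := invertibleOfFromBlocks₁₁Invertible A B C D
  rw [← invOf_eq_nonsing_inv (fromBlocks A B C D), invOf_fromBlocks₁₁_eq]
  simp only [toBlocks_fromBlocks₁₂, invOf_eq_nonsing_inv]

theorem sumElim_zero_dotProduct_mulVec_zero_sumElim (M : Matrix (m ⊕ n) (m ⊕ n) α)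
    (x : m → α) (y : n → α) :
    Sum.elim x 0 ⬝ᵥ (M *ᵥ Sum.elim 0 y) = x ⬝ᵥ (M.toBlocks₁₂ *ᵥ y) := by
  conv_lhs => rw [← fromBlocks_toBlocks M]
  simp [fromBlocks_mulVec, sumElim_dotProduct_sumElim]

theorem mul_inv_add_smul_one [DecidableEq n] (M : Matrix n n α) (τ : α)
    (h : IsUnit (M + τ • 1)) :
    M * (M + τ • 1)⁻¹ = 1 - τ • (M + τ • 1)⁻¹ := by
  calc M * (M + τ • 1)⁻¹ = (M + τ • 1 - τ • 1) * (M + τ • 1)⁻¹ := by rw [add_sub_cancel_right]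
    _ = 1 - τ • (M + τ • 1)⁻¹ := by
      rw [Matrix.sub_mul, mul_nonsing_inv _ ((isUnit_iff_isUnit_det _).mp h), smul_mul, one_mul]

end Matrix

/-- Schur-complement representation of the deterministic spurious-correlation
functional: for `Σ = [[Σ_xx, Σ_xy], [Σ_yx, Σ_yy]]` positive definite, `θ* = (θ*_x, 0)` and
`τ > 0`,
`θ*ᵀ Σ (Σ + τI)⁻¹ P_y Σ θ* = τ θ*_xᵀ (Σ_xx + τI)⁻¹ Σ_xy (Σ_yy + τI − Σ_yx(Σ_xx + τI)⁻¹Σ_xy)⁻¹ Σ_yx θ*_x`. -/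
theorem deterministic_spurious_correlation_schur_form
    (d : ℕ) (Sxx Sxy Syx Syy : Matrix (Fin d) (Fin d) ℝ)
    (Sig : Matrix (Fin d ⊕ Fin d) (Fin d ⊕ Fin d) ℝ)
    (hSig : Sig = Matrix.fromBlocks Sxx Sxy Syx Syy)
    (hpd : Sig.PosDef)
    (θx : Fin d → ℝ) (τ : ℝ) (hτ : 0 < τ) :
    dotProduct (Sum.elim θx (0 : Fin d → ℝ))
        ((Sig * (Sig + τ • 1)⁻¹ * Py d * Sig).mulVec (Sum.elim θx 0)) =
      τ * dotProduct θx
        (((Sxx + τ • 1)⁻¹ * Sxy *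
            (Syy + τ • 1 - Syx * (Sxx + τ • 1)⁻¹ * Sxy)⁻¹ * Syx).mulVec θx) := by
  have hA : (Sig + τ • 1).PosDef := hpd.add (PosDef.one.smul hτ)
  have hA_blocks : Sig + τ • 1 = fromBlocks (Sxx + τ • 1) Sxy Syx (Syy + τ • 1) := by
    simp [hSig, ← fromBlocks_one, fromBlocks_smul, fromBlocks_add]
  have hA₁₁ : (Sxx + τ • 1).PosDef := (hA_blocks ▸ hA).submatrix Sum.inl_injective
  have hPy : (Py d * Sig) *ᵥ Sum.elim θx 0 = Sum.elim (0 : Fin d → ℝ) (Syx *ᵥ θx) := by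
    simp [Py, hSig, fromBlocks_multiply, fromBlocks_mulVec]
  calc _ = Sum.elim θx 0 ⬝ᵥ
          ((1 - τ • (Sig + τ • 1)⁻¹) *ᵥ Sum.elim (0 : Fin d → ℝ) (Syx *ᵥ θx)) := by
        rw [Matrix.mul_assoc, ← mulVec_mulVec, hPy, mul_inv_add_smul_one _ _ hA.isUnit]
    _ = -τ * (Sum.elim θx 0 ⬝ᵥ
          ((Sig + τ • 1)⁻¹ *ᵥ Sum.elim (0 : Fin d → ℝ) (Syx *ᵥ θx))) := by
        simp [sub_mulVec, smul_mulVec, sumElim_dotProduct_sumElim]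
    _ = _ := by
        rw [sumElim_zero_dotProduct_mulVec_zero_sumElim, hA_blocks,
          toBlocks₁₂_inv_fromBlocks hA₁₁.isUnit (hA_blocks ▸ hA.isUnit)]
        simp [neg_mulVec, mulVec_mulVec, Matrix.mul_assoc]

end
end

section
/- Let Σ ∈ ℝ^{m×m} be symmetric positive semidefinite, let n be a positive integer, and let λ > 0. Then the equation 1 − λ/τ = (1/n) tr((Σ + τI)^{-1} Σ) has a unique solution τ = τ(λ) in (0, ∞). Moreover: (i) τ(λ) ≥ λ; (ii) if m < n then τ(λ) ≤ λ (1 − m/n)^{-1}; and (iii) τ(λ) is strictly increasing as a function of λ on (0, ∞). -/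
open Matrix Finset

noncomputable section

lemma trace_inv_mul_eq (m : ℕ) (Sig : Matrix (Fin m) (Fin m) ℝ) (hpsd : Sig.PosSemidef)
    (τ : ℝ) (hτ : 0 < τ) :
    ((Sig + τ • 1)⁻¹ * Sig).trace
      = ∑ i, hpsd.1.eigenvalues i / (hpsd.1.eigenvalues i + τ) := by
  classical
  set μ := hpsd.1.eigenvalues with hμdef
  set U : Matrix (Fin m) (Fin m) ℝ := (hpsd.1.eigenvectorUnitary : Matrix (Fin m) (Fin m) ℝ)
    with hUdef
  have hUU : U * star U = 1 := (Matrix.mem_unitaryGroup_iff).mp hpsd.1.eigenvectorUnitary.2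
  have hUU' : star U * U = 1 := (Matrix.mem_unitaryGroup_iff').mp hpsd.1.eigenvectorUnitary.2
  have key : ∀ (A B : Matrix (Fin m) (Fin m) ℝ),
      (U * A * star U) * (U * B * star U) = U * (A * B) * star U := by
    intro A B
    rw [Matrix.mul_assoc (U * A) (star U), ← Matrix.mul_assoc (star U) (U * B) (star U),
      ← Matrix.mul_assoc (star U) U B, hUU', Matrix.one_mul, ← Matrix.mul_assoc,
      Matrix.mul_assoc U A B]
  have hspec : Sig = U * diagonal μ * star U := by
    have := hpsd.1.spectral_theorem
    simpa using this
  have hv : ∀ i, μ i + τ ≠ 0 := fun i =>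
    ne_of_gt (add_pos_of_nonneg_of_pos (hpsd.eigenvalues_nonneg i) hτ)
  have hdiag : diagonal (fun i => μ i + τ) = diagonal μ + τ • (1 : Matrix (Fin m) (Fin m) ℝ) := by
    rw [smul_one_eq_diagonal, ← diagonal_add]
  have hsum : Sig + τ • 1 = U * diagonal (fun i => μ i + τ) * star U := by
    rw [hdiag, mul_add, add_mul, ← hspec, Matrix.mul_smul, Matrix.smul_mul, Matrix.mul_one, hUU]
  have hinv : (Sig + τ • 1)⁻¹ = U * diagonal (fun i => (μ i + τ)⁻¹) * star U := by
    apply inv_eq_right_inv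
    rw [hsum, key, diagonal_mul_diagonal]
    have : (fun i => (μ i + τ) * (μ i + τ)⁻¹) = fun _ => (1:ℝ) := by
      funext i; exact mul_inv_cancel₀ (hv i)
    rw [this, diagonal_one, Matrix.mul_one, hUU]
  rw [hinv, hspec, key, trace_mul_cycle, ← Matrix.mul_assoc, hUU', Matrix.one_mul,
    diagonal_mul_diagonal, trace_diagonal]
  exact Finset.sum_congr rfl fun i _ => (inv_mul_eq_div _ _)

/-- Existence, uniqueness and basic properties of the effective
regularization `τ(λ)`: for `Σ ⪰ 0`, `n ≥ 1` and `λ > 0`, the equation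
`1 − λ/τ = (1/n) tr((Σ + τI)⁻¹ Σ)` has a unique positive solution `τ`, which satisfies
`τ ≥ λ`, `τ ≤ λ(1 − m/n)⁻¹` when `m < n`, and is strictly increasing in `λ`. -/
theorem effective_regularization_exists_unique_and_monotone
    (m n : ℕ) (hn : 0 < n)
    (Sig : Matrix (Fin m) (Fin m) ℝ) (hpsd : Sig.PosSemidef) :
    (∀ lam : ℝ, 0 < lam →
      (∃! τ : ℝ, 0 < τ ∧
          1 - lam / τ = (1 / (n : ℝ)) * ((Sig + τ • 1)⁻¹ * Sig).trace) ∧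
      (∀ τ : ℝ, 0 < τ →
        1 - lam / τ = (1 / (n : ℝ)) * ((Sig + τ • 1)⁻¹ * Sig).trace →
        lam ≤ τ ∧ (m < n → τ ≤ lam * (1 - (m : ℝ) / n)⁻¹))) ∧
    (∀ lam₁ lam₂ τ₁ τ₂ : ℝ, 0 < lam₁ → lam₁ < lam₂ →
      0 < τ₁ → 1 - lam₁ / τ₁ = (1 / (n : ℝ)) * ((Sig + τ₁ • 1)⁻¹ * Sig).trace →
      0 < τ₂ → 1 - lam₂ / τ₂ = (1 / (n : ℝ)) * ((Sig + τ₂ • 1)⁻¹ * Sig).trace →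
      τ₁ < τ₂) := by
  classical
  have hn' : (0:ℝ) < n := Nat.cast_pos.mpr hn
  set μ := hpsd.1.eigenvalues with hμdef
  have hμ : ∀ i, 0 ≤ μ i := hpsd.eigenvalues_nonneg
  set G : ℝ → ℝ := fun τ => ∑ i, μ i / (μ i + τ) with hGdef
  set F : ℝ → ℝ → ℝ := fun lam τ => lam / τ + (1/(n:ℝ)) * G τ with hFdef
  have hden : ∀ (i : Fin m) (τ : ℝ), 0 < τ → 0 < μ i + τ := fun i τ hτ =>
    add_pos_of_nonneg_of_pos (hμ i) hτ
  have heq : ∀ lam τ : ℝ, 0 < τ →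
      ((1 - lam / τ = (1 / (n : ℝ)) * ((Sig + τ • 1)⁻¹ * Sig).trace) ↔ F lam τ = 1) := by
    intro lam τ hτ
    rw [trace_inv_mul_eq m Sig hpsd τ hτ]
    simp only [hFdef, hGdef]
    constructor <;> intro h <;> linarith
  have hG0 : ∀ τ : ℝ, 0 < τ → 0 ≤ G τ := by
    intro τ hτ
    exact Finset.sum_nonneg fun i _ => div_nonneg (hμ i) (hden i τ hτ).le
  have hGm : ∀ τ : ℝ, 0 < τ → G τ ≤ m := by
    intro τ hτ
    calc G τ ≤ ∑ _i : Fin m, (1:ℝ) := by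
          apply Finset.sum_le_sum
          intro i _
          rw [div_le_one (hden i τ hτ)]
          linarith
      _ = m := by simp
  have hGanti : ∀ τ₁ τ₂ : ℝ, 0 < τ₁ → τ₁ ≤ τ₂ → G τ₂ ≤ G τ₁ := by
    intro τ₁ τ₂ h1 h12
    apply Finset.sum_le_sum
    intro i _
    apply div_le_div_of_nonneg_left (hμ i) (hden i τ₁ h1)
    linarith
  have hFanti : ∀ lam : ℝ, 0 < lam → StrictAntiOn (F lam) (Set.Ioi 0) := by
    intro lam hlam τ₁ h1 τ₂ h2 h12
    simp only [Set.mem_Ioi] at h1 h2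
    have hd : lam / τ₂ < lam / τ₁ := div_lt_div_of_pos_left hlam h1 h12
    have hg : G τ₂ ≤ G τ₁ := hGanti τ₁ τ₂ h1 h12.le
    have : (1/(n:ℝ)) * G τ₂ ≤ (1/(n:ℝ)) * G τ₁ :=
      mul_le_mul_of_nonneg_left hg (by positivity)
    simp only [hFdef]
    linarith
  have hFcont : ∀ lam : ℝ, ContinuousOn (F lam) (Set.Ioi 0) := by
    intro lam
    apply ContinuousOn.add
    · exact continuousOn_const.div continuousOn_id fun τ hτ => ne_of_gt hτ
    · apply ContinuousOn.mul continuousOn_const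
      apply continuousOn_finset_sum
      intro i _
      exact continuousOn_const.div (continuous_const.add continuous_id).continuousOn
        fun τ hτ => ne_of_gt (hden i τ hτ)
  clear_value F G μ
  -- existence of a root for each lam > 0
  have hex : ∀ lam : ℝ, 0 < lam → ∃ τ : ℝ, 0 < τ ∧ F lam τ = 1 := by
    intro lam hlam
    set S : ℝ := ∑ i, μ i with hS
    clear_value S
    have hS0 : 0 ≤ S := by rw [hS]; exact Finset.sum_nonneg fun i _ => hμ i
    set b : ℝ := lam + S / n + 1 with hb
    clear_value b
    have hb0 : 0 < b := by rw [hb]; positivity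
    have hab : lam ≤ b := by
      have : 0 ≤ S / n := by positivity
      linarith
    have hFa : 1 ≤ F lam lam := by
      have : lam / lam = 1 := div_self (ne_of_gt hlam)
      have h0 : 0 ≤ (1/(n:ℝ)) * G lam := mul_nonneg (by positivity) (hG0 lam hlam)
      simp only [hFdef]
      linarith
    have hFb : F lam b ≤ 1 := by
      have hGb : G b ≤ S / b := by
        simp only [hGdef, hS, Finset.sum_div]
        apply Finset.sum_le_sum
        intro i _
        apply div_le_div_of_nonneg_left (hμ i) hb0
        linarith [hμ i]
      have h1 : (1/(n:ℝ)) * G b ≤ (1/(n:ℝ)) * (S / b) :=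
        mul_le_mul_of_nonneg_left hGb (by positivity)
      have h2 : F lam b ≤ lam / b + (1/(n:ℝ)) * (S / b) := by
        simp only [hFdef]; linarith
      have h3 : lam / b + (1/(n:ℝ)) * (S / b) = (lam + S / n) / b := by
        field_simp
      have h4 : (lam + S / n) / b < 1 := by
        rw [div_lt_one hb0]
        linarith
      linarith
    have hsub := intermediate_value_Icc' hab
      ((hFcont lam).mono (fun x hx => lt_of_lt_of_le hlam hx.1))
    have h1mem : (1:ℝ) ∈ Set.Icc (F lam b) (F lam lam) := ⟨hFb, hFa⟩
    obtain ⟨τ, hτmem, hFτ⟩ := hsub h1mem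
    exact ⟨τ, lt_of_lt_of_le hlam hτmem.1, hFτ⟩
  refine ⟨fun lam hlam => ⟨?_, ?_⟩, ?_⟩
  · -- existence and uniqueness
    obtain ⟨τ, hτ0, hFτ⟩ := hex lam hlam
    refine ⟨τ, ⟨hτ0, (heq lam τ hτ0).mpr hFτ⟩, ?_⟩
    rintro τ' ⟨hτ'0, hτ'eq⟩
    have hFτ' : F lam τ' = 1 := (heq lam τ' hτ'0).mp hτ'eq
    exact (hFanti lam hlam).injOn hτ'0 hτ0 (by rw [hFτ', hFτ])
  · -- bounds
    intro τ hτ0 hτeq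
    have hFτ : F lam τ = 1 := (heq lam τ hτ0).mp hτeq
    simp only [hFdef] at hFτ
    have hg0 : 0 ≤ (1/(n:ℝ)) * G τ := mul_nonneg (by positivity) (hG0 τ hτ0)
    constructor
    · have : lam / τ ≤ 1 := by linarith
      rw [div_le_one hτ0] at this
      exact this
    · intro hmn
      have hc : (0:ℝ) < 1 - (m:ℝ)/n := by
        have : (m:ℝ) < n := by exact_mod_cast hmn
        rw [sub_pos, div_lt_one hn']
        exact this
      have hgm : (1/(n:ℝ)) * G τ ≤ (m:ℝ)/n := by
        calc (1/(n:ℝ)) * G τ ≤ (1/(n:ℝ)) * m :=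
              mul_le_mul_of_nonneg_left (hGm τ hτ0) (by positivity)
          _ = (m:ℝ)/n := by ring
      have hlow : 1 - (m:ℝ)/n ≤ lam / τ := by linarith
      rw [le_div_iff₀ hτ0] at hlow
      rw [← div_eq_mul_inv, le_div_iff₀ hc]
      linarith
  · -- monotonicity
    intro lam₁ lam₂ τ₁ τ₂ h1 h12 hτ1 he1 hτ2 he2
    have hF1 : F lam₁ τ₁ = 1 := (heq lam₁ τ₁ hτ1).mp he1
    have hF2 : F lam₂ τ₂ = 1 := (heq lam₂ τ₂ hτ2).mp he2
    by_contra hcon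
    push_neg at hcon
    have hanti : F lam₁ τ₁ ≤ F lam₁ τ₂ :=
      (hFanti lam₁ h1).antitoneOn hτ2 hτ1 hcon
    have hstr : F lam₁ τ₂ < F lam₂ τ₂ := by
      simp only [hFdef]
      have : lam₁ / τ₂ < lam₂ / τ₂ := by
        apply div_lt_div_of_pos_right h12 hτ2
      linarith
    linarith
end
end

section
/- Let Σ ∈ ℝ^{m×m} be symmetric positive definite and θ ∈ ℝ^m. Then the function F: (0, ∞) → ℝ defined by F(τ) := τ² ‖(Σ + τI)^{-1} Σ^{1/2} θ‖₂² is differentiable, and for every τ > 0 its derivative equals F'(τ) = 2τ · θᵀ (Σ + τI)^{-3} Σ² θ. In particular F'(τ) ≥ 0, and F'(τ) ≥ (2/τ) · (λmin(Σ)/(λmin(Σ) + τ)) · F(τ). -/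
open Matrix

noncomputable section

/-- The positive semidefinite square root of a positive semidefinite matrix
(the definition `Matrix.PosSemidef.sqrt` of the older Mathlib, since removed). -/
def Matrix.PosSemidef.sqrt {n 𝕜 : Type*} [Fintype n] [DecidableEq n] [RCLike 𝕜] [PartialOrder 𝕜]
    {A : Matrix n n 𝕜} (hA : A.PosSemidef) : Matrix n n 𝕜 :=
  (hA.1.eigenvectorUnitary : Matrix n n 𝕜) * diagonal ((↑) ∘ (√·) ∘ hA.1.eigenvalues) *
    (star hA.1.eigenvectorUnitary : Matrix n n 𝕜)

/-!
Diagonalise `Σ = U diag(λ) Uᵀ` and put `w = Uᵀ θ`. Every matrix in the statement is a function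
of `Σ`, so the continuous functional calculus turns both sides into sums over the eigenvalues:
`F(τ) = ∑ wᵢ² τ² λᵢ / (λᵢ + τ)²` and `2τ θᵀ (Σ + τI)⁻³ Σ² θ = ∑ wᵢ² 2τ λᵢ² / (λᵢ + τ)³`.
The derivative identity is then termwise calculus, and the lower bound is termwise the
monotonicity of `x ↦ x / (x + τ)` on `[0, ∞)`, applied to `λmin ≤ λᵢ`.
-/

lemma sqNorm_eq_dotProduct {m : Type*} [Fintype m] (v : m → ℝ) : sqNorm v = v ⬝ᵥ v := by
  simp only [sqNorm, dotProduct, sq]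

lemma Matrix.PosSemidef.lmin_nonneg {n : Type*} [Fintype n] {A : Matrix n n ℝ}
    (hA : A.PosSemidef) : 0 ≤ lmin A :=
  Real.iInf_nonneg fun v => by simpa using hA.dotProduct_mulVec_nonneg v.1

lemma hasDerivAt_sq_mul_div_add_sq {a t : ℝ} (h : a + t ≠ 0) :
    HasDerivAt (fun s => s ^ 2 * a / (a + s) ^ 2) (2 * t * a ^ 2 / (a + t) ^ 3) t := by
  have hnum : HasDerivAt (fun s : ℝ => s ^ 2 * a) (2 * t * a) t := by
    simpa using (hasDerivAt_pow 2 t).mul_const a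
  have hden : HasDerivAt (fun s : ℝ => (a + s) ^ 2) (2 * (a + t)) t := by
    simpa using ((hasDerivAt_id t).const_add a).fun_pow 2
  refine (hnum.fun_div hden (pow_ne_zero 2 h)).congr_deriv ?_
  field_simp
  ring

lemma div_add_le_div_add {l a t : ℝ} (hl : 0 ≤ l) (hla : l ≤ a) (ht : 0 < t) :
    l / (l + t) ≤ a / (a + t) := by
  rw [div_le_div_iff₀ (by linarith) (by linarith)]
  nlinarith

lemma two_div_mul_div_add_mul_sq_mul_div_add_sq_le {l a t : ℝ} (hl : 0 ≤ l) (hla : l ≤ a)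
    (ht : 0 < t) :
    2 / t * (l / (l + t)) * (t ^ 2 * a / (a + t) ^ 2) ≤ 2 * t * a ^ 2 / (a + t) ^ 3 := by
  have ha : 0 ≤ a := hl.trans hla
  calc 2 / t * (l / (l + t)) * (t ^ 2 * a / (a + t) ^ 2)
      = l / (l + t) * (2 * t * a / (a + t) ^ 2) := by field_simp
    _ ≤ a / (a + t) * (2 * t * a / (a + t) ^ 2) :=
      mul_le_mul_of_nonneg_right (div_add_le_div_add hl hla ht) (by positivity)
    _ = 2 * t * a ^ 2 / (a + t) ^ 3 := by field_simp

namespace Matrix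

variable {n : Type*} [Fintype n] [DecidableEq n] {A : Matrix n n ℝ}

lemma PosSemidef.sqrt_eq_cfc (hA : A.PosSemidef) : hA.sqrt = cfc Real.sqrt A := by
  rw [hA.1.cfc_eq, IsHermitian.cfc, Unitary.conjStarAlgAut_apply, PosSemidef.sqrt]

lemma IsHermitian.inv_add_smul_one_eq_cfc (hA : A.IsHermitian) {t : ℝ}
    (ht : ∀ x ∈ spectrum ℝ A, x + t ≠ 0) :
    (A + t • 1)⁻¹ = cfc (fun x => (x + t)⁻¹) A :=
  calc (A + t • 1)⁻¹ = Ring.inverse (cfc (· + t) A) := by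
        rw [cfc_add_const t _ A, cfc_id' ℝ A, nonsing_inv_eq_ringInverse,
          Algebra.algebraMap_eq_smul_one]
    _ = cfc (fun x => (x + t)⁻¹) A := (cfc_inv _ A ht (ha := hA.isSelfAdjoint)).symm

lemma IsHermitian.dotProduct_cfc_mulVec (hA : A.IsHermitian) (f : ℝ → ℝ) (x : n → ℝ) :
    x ⬝ᵥ (cfc f A *ᵥ x) =
      ∑ i, f (hA.eigenvalues i) * (star (hA.eigenvectorUnitary : Matrix n n ℝ) *ᵥ x) i ^ 2 := by
  rw [hA.cfc_eq, IsHermitian.cfc, Unitary.conjStarAlgAut_apply, ← mulVec_mulVec, ← mulVec_mulVec,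
    dotProduct_mulVec, ← mulVec_transpose, ← conjTranspose_eq_transpose_of_trivial,
    ← star_eq_conjTranspose]
  simp only [dotProduct, mulVec_diagonal]
  exact Finset.sum_congr rfl fun i _ => by simp; ring

lemma IsHermitian.sqNorm_cfc_mulVec (hA : A.IsHermitian) (f : ℝ → ℝ) (x : n → ℝ) :
    sqNorm (cfc f A *ᵥ x) =
      ∑ i, f (hA.eigenvalues i) ^ 2 * (star (hA.eigenvectorUnitary : Matrix n n ℝ) *ᵥ x) i ^ 2 := by
  have hsymm : (cfc f A)ᵀ = cfc f A := by
    rw [← conjTranspose_eq_transpose_of_trivial]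
    exact cfc_predicate f A
  have hf : ContinuousOn f (spectrum ℝ A) := A.finite_real_spectrum.continuousOn f
  rw [sqNorm_eq_dotProduct, dotProduct_mulVec, ← mulVec_transpose, hsymm, mulVec_mulVec,
    ← cfc_mul f f A, dotProduct_comm, hA.dotProduct_cfc_mulVec]
  simp only [sq]

lemma IsHermitian.eigenvectorBasis_dotProduct_cfc_mulVec (hA : A.IsHermitian) (f : ℝ → ℝ)
    (j : n) :
    ⇑(hA.eigenvectorBasis j) ⬝ᵥ (cfc f A *ᵥ ⇑(hA.eigenvectorBasis j)) = f (hA.eigenvalues j) := by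
  rw [hA.dotProduct_cfc_mulVec, hA.star_eigenvectorUnitary_mulVec]
  simp [Pi.single_apply]

namespace PosSemidef

lemma lmin_le_eigenvalues (hA : A.PosSemidef) (j : n) : lmin A ≤ hA.1.eigenvalues j := by
  set v := ⇑(hA.1.eigenvectorBasis j)
  have hv : sqNorm v = 1 := by
    have := hA.1.eigenvectorBasis_dotProduct_cfc_mulVec (fun _ => 1) j
    rwa [cfc_const_one ℝ A hA.1.isSelfAdjoint, one_mulVec, ← sqNorm_eq_dotProduct] at this
  have hbdd : BddBelow (Set.range fun u : {u : n → ℝ // sqNorm u = 1} => u.1 ⬝ᵥ (A *ᵥ u.1)) :=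
    ⟨0, by rintro _ ⟨u, rfl⟩; simpa using hA.dotProduct_mulVec_nonneg u.1⟩
  calc lmin A ≤ v ⬝ᵥ (A *ᵥ v) := ciInf_le hbdd ⟨v, hv⟩
    _ = v ⬝ᵥ (cfc id A *ᵥ v) := by rw [cfc_id ℝ A hA.1.isSelfAdjoint]
    _ = hA.1.eigenvalues j := hA.1.eigenvectorBasis_dotProduct_cfc_mulVec id j

lemma add_ne_zero_of_mem_spectrum (hA : A.PosSemidef) {t : ℝ} (ht : 0 < t) :
    ∀ x ∈ spectrum ℝ A, x + t ≠ 0 := by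
  rw [hA.1.spectrum_real_eq_range_eigenvalues]
  rintro _ ⟨i, rfl⟩
  linarith [hA.eigenvalues_nonneg i]

lemma inv_add_smul_one_mul_sqrt (hA : A.PosSemidef) {t : ℝ} (ht : 0 < t) :
    (A + t • 1)⁻¹ * hA.sqrt = cfc (fun x => (x + t)⁻¹ * √x) A := by
  have hcont : ∀ f : ℝ → ℝ, ContinuousOn f (spectrum ℝ A) := A.finite_real_spectrum.continuousOn
  rw [hA.1.inv_add_smul_one_eq_cfc (hA.add_ne_zero_of_mem_spectrum ht), hA.sqrt_eq_cfc,
    cfc_mul (hf := hcont _) (hg := hcont _)]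

lemma inv_add_smul_one_pow_mul_sq (hA : A.PosSemidef) {t : ℝ} (ht : 0 < t) :
    (A + t • 1)⁻¹ ^ 3 * A ^ 2 = cfc (fun x => (x + t)⁻¹ ^ 3 * x ^ 2) A := by
  have hcont : ∀ f : ℝ → ℝ, ContinuousOn f (spectrum ℝ A) := A.finite_real_spectrum.continuousOn
  rw [hA.1.inv_add_smul_one_eq_cfc (hA.add_ne_zero_of_mem_spectrum ht),
    cfc_mul (hf := hcont _) (hg := hcont _), cfc_pow (hf := hcont _) (ha := hA.1.isSelfAdjoint),
    cfc_pow_id A 2 hA.1.isSelfAdjoint]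

lemma sq_mul_sqNorm_inv_add_smul_one_mul_sqrt_mulVec (hA : A.PosSemidef) {t : ℝ} (ht : 0 < t)
    (x : n → ℝ) :
    t ^ 2 * sqNorm (((A + t • 1)⁻¹ * hA.sqrt) *ᵥ x) =
      ∑ i, (star (hA.1.eigenvectorUnitary : Matrix n n ℝ) *ᵥ x) i ^ 2 *
        (t ^ 2 * hA.1.eigenvalues i / (hA.1.eigenvalues i + t) ^ 2) := by
  rw [hA.inv_add_smul_one_mul_sqrt ht, hA.1.sqNorm_cfc_mulVec, Finset.mul_sum]
  refine Finset.sum_congr rfl fun i _ => ?_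
  rw [mul_pow, Real.sq_sqrt (hA.eigenvalues_nonneg i)]
  field_simp

lemma mul_dotProduct_inv_add_smul_one_pow_mul_sq_mulVec (hA : A.PosSemidef) {t : ℝ}
    (ht : 0 < t) (x : n → ℝ) :
    2 * t * x ⬝ᵥ (((A + t • 1)⁻¹ ^ 3 * A ^ 2) *ᵥ x) =
      ∑ i, (star (hA.1.eigenvectorUnitary : Matrix n n ℝ) *ᵥ x) i ^ 2 *
        (2 * t * hA.1.eigenvalues i ^ 2 / (hA.1.eigenvalues i + t) ^ 3) := by
  rw [hA.inv_add_smul_one_pow_mul_sq ht, hA.1.dotProduct_cfc_mulVec, Finset.mul_sum]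
  refine Finset.sum_congr rfl fun i _ => ?_
  field_simp

end PosSemidef

end Matrix

/-- Derivative of the bias term of the ridge-regression test loss:
`F(τ) = τ²‖(Σ + τI)⁻¹ Σ^{1/2} θ‖²` has derivative `F'(τ) = 2τ θᵀ(Σ + τI)⁻³ Σ² θ ≥ 0`, with
`F'(τ) ≥ (2/τ)(λmin(Σ)/(λmin(Σ) + τ)) F(τ)`. -/
theorem bias_term_derivative
    (m : ℕ) (Sig : Matrix (Fin m) (Fin m) ℝ) (hpd : Sig.PosDef)
    (θ : Fin m → ℝ)
    (F : ℝ → ℝ)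
    (hF : ∀ τ : ℝ, F τ =
      τ ^ 2 * sqNorm (((Sig + τ • 1)⁻¹ * hpd.posSemidef.sqrt).mulVec θ)) :
    ∀ τ : ℝ, 0 < τ →
      HasDerivAt F
        (2 * τ * dotProduct θ ((((Sig + τ • 1)⁻¹) ^ 3 * Sig ^ 2).mulVec θ)) τ ∧
      0 ≤ 2 * τ * dotProduct θ ((((Sig + τ • 1)⁻¹) ^ 3 * Sig ^ 2).mulVec θ) ∧
      (2 / τ) * (lmin Sig / (lmin Sig + τ)) * F τ ≤
        2 * τ * dotProduct θ ((((Sig + τ • 1)⁻¹) ^ 3 * Sig ^ 2).mulVec θ) := by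
  intro τ hτ
  have hS := hpd.posSemidef
  have hpos : ∀ i, 0 < hS.1.eigenvalues i + τ := fun i => by linarith [hS.eigenvalues_nonneg i]
  have hF_eq : ∀ t > 0, F t = _ := fun t ht =>
    (hF t).trans (hS.sq_mul_sqNorm_inv_add_smul_one_mul_sqrt_mulVec ht θ)
  rw [hS.mul_dotProduct_inv_add_smul_one_pow_mul_sq_mulVec hτ θ]
  refine ⟨?_, ?_, ?_⟩
  · refine (HasDerivAt.fun_sum fun i _ =>
      (hasDerivAt_sq_mul_div_add_sq (hpos i).ne').const_mul _).congr_of_eventuallyEq ?_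
    exact Filter.eventuallyEq_of_mem (Ioi_mem_nhds hτ) hF_eq
  · exact Finset.sum_nonneg fun i _ => mul_nonneg (sq_nonneg _) (by have := hpos i; positivity)
  · rw [hF_eq τ hτ, Finset.mul_sum]
    refine Finset.sum_le_sum fun i _ => ?_
    rw [mul_left_comm]
    exact mul_le_mul_of_nonneg_left (two_div_mul_div_add_mul_sq_mul_div_add_sq_le
      hS.lmin_nonneg (hS.lmin_le_eigenvalues i) hτ) (sq_nonneg _)

end
end
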